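/- arXiv:1602.02345 — 9 statements merged into one kernel-verified Lean document; each statement's English description precedes it below -/
import Mathlib

section
/- Let T be a real-valued random variable whose cdf is F_θ for some θ ≠ 0, and let P = 2·min{F_0(T), 1 − F_0(T)} be the two-sided p-value. Then for every α ∈ (0,1), the type 3 (directional) error rate satisfies Pr(P ≤ α and θ·T < 0) ≤ α/2. -/
open MeasureTheory ProbabilityTheory

/-- For a single test statistic `T` with continuous cdf `F θ` (θ ≠ 0),
where `F 0` is symmetric about 0 and the family is stochastically increasing in θ,
the directional (type 3) error rate of the two-sided p-value test at level α
satisfies Pr(P ≤ α and θ·T < 0) ≤ α/2. -/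
theorem type3_error_rate_le_half_alpha
    {Ω : Type*} [MeasurableSpace Ω] (Pr : Measure Ω) [IsProbabilityMeasure Pr]
    (F : ℝ → ℝ → ℝ)
    (hFcont : ∀ θ, Continuous (F θ))
    (hFmono : ∀ θ, Monotone (F θ))
    (hFsym : ∀ x : ℝ, F 0 (-x) = 1 - F 0 x)
    (hstoch : ∀ θ θ' : ℝ, θ ≤ θ' → ∀ x, F θ' x ≤ F θ x)
    (θ : ℝ) (hθ : θ ≠ 0)
    (T : Ω → ℝ) (hT : Measurable T)
    (hcdf : ∀ x : ℝ, (Pr {ω | T ω ≤ x}).toReal = F θ x)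
    (α : ℝ) (hα : α ∈ Set.Ioo (0 : ℝ) 1) :
    (Pr {ω | 2 * min (F 0 (T ω)) (1 - F 0 (T ω)) ≤ α ∧ θ * T ω < 0}).toReal ≤ α / 2 := by
  obtain ⟨hα0, hα1⟩ := hα
  have hF00 : F 0 0 = 1 / 2 := by
    have h := hFsym 0
    rw [neg_zero] at h
    linarith
  set S : Set ℝ := {x | F 0 x ≤ α / 2} with hSdef
  have hSclosed : IsClosed S := isClosed_le (hFcont 0) continuous_const
  have hSbdd : BddAbove S := by
    refine ⟨0, fun x hx => ?_⟩
    by_contra hx0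
    push_neg at hx0
    have : F 0 0 ≤ F 0 x := hFmono 0 hx0.le
    have hx' : F 0 x ≤ α / 2 := hx
    linarith
  rcases lt_or_gt_of_ne hθ with hneg | hpos
  · -- θ < 0 : event forces T ω > 0 and -T ω ∈ S
    have hmem : ∀ ω, ω ∈ {ω | 2 * min (F 0 (T ω)) (1 - F 0 (T ω)) ≤ α ∧ θ * T ω < 0} →
        -T ω ∈ S := by
      intro ω ⟨h1, h2⟩
      have hTpos : 0 < T ω := by
        rcases lt_trichotomy (T ω) 0 with h | h | h
        · exfalso; nlinarith
        · exfalso; rw [h, mul_zero] at h2; exact lt_irrefl 0 h2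
        · exact h
      have hle : F 0 (-T ω) ≤ F 0 (T ω) := hFmono 0 (by linarith)
      have hsym := hFsym (T ω)
      have hmin : min (F 0 (T ω)) (1 - F 0 (T ω)) = 1 - F 0 (T ω) :=
        min_eq_right (by linarith)
      rw [hmin] at h1
      show F 0 (-T ω) ≤ α / 2
      linarith
    rcases Set.eq_empty_or_nonempty S with hemp | hne
    · have hnull : Pr {ω | 2 * min (F 0 (T ω)) (1 - F 0 (T ω)) ≤ α ∧ θ * T ω < 0} = 0 := by
        exact measure_mono_null (fun ω hω => absurd (hmem ω hω) (by simp [hemp]))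
          measure_empty
      rw [hnull, ENNReal.toReal_zero]
      positivity
    · set c := sSup S with hc
      have hcS : c ∈ S := hSclosed.csSup_mem hne hSbdd
      have hsub : {ω | 2 * min (F 0 (T ω)) (1 - F 0 (T ω)) ≤ α ∧ θ * T ω < 0} ⊆
          {ω | -c ≤ T ω} := by
        intro ω hω
        have := le_csSup hSbdd (hmem ω hω)
        show -c ≤ T ω
        linarith
      have key : ∀ ε > (0 : ℝ),
          (Pr {ω | 2 * min (F 0 (T ω)) (1 - F 0 (T ω)) ≤ α ∧ θ * T ω < 0}).toReal
            ≤ F 0 (c + ε) := by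
        intro ε hε
        have hdisj : Disjoint {ω | T ω ≤ -c - ε} {ω | -c ≤ T ω} := by
          rw [Set.disjoint_left]
          intro ω h1 h2
          simp only [Set.mem_setOf_eq] at h1 h2
          linarith
        have hmeas1 : MeasurableSet {ω | T ω ≤ -c - ε} := hT measurableSet_Iic
        have hmeas2 : MeasurableSet {ω | -c ≤ T ω} := hT measurableSet_Ici
        have hunion : Pr {ω | T ω ≤ -c - ε} + Pr {ω | -c ≤ T ω} ≤ 1 := by
          rw [← measure_union hdisj hmeas2]
          exact (measure_mono (Set.subset_univ _)).trans_eq measure_univ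
        have h1 : (Pr {ω | T ω ≤ -c - ε}).toReal + (Pr {ω | -c ≤ T ω}).toReal ≤ 1 := by
          have h := ENNReal.toReal_mono ENNReal.one_ne_top hunion
          rw [ENNReal.toReal_add (measure_ne_top _ _) (measure_ne_top _ _)] at h
          simpa using h
        have h2 : (Pr {ω | 2 * min (F 0 (T ω)) (1 - F 0 (T ω)) ≤ α ∧ θ * T ω < 0}).toReal
            ≤ (Pr {ω | -c ≤ T ω}).toReal :=
          ENNReal.toReal_mono (measure_ne_top _ _) (measure_mono hsub)
        have h3 : (Pr {ω | T ω ≤ -c - ε}).toReal = F θ (-c - ε) := hcdf _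
        have h4 : F 0 (-c - ε) ≤ F θ (-c - ε) := hstoch θ 0 hneg.le _
        have h5 : F 0 (-(c + ε)) = 1 - F 0 (c + ε) := hFsym _
        have h6 : -(c + ε) = -c - ε := by ring
        rw [h6] at h5
        linarith
      have htend : Filter.Tendsto (fun ε : ℝ => F 0 (c + ε)) (nhdsWithin 0 (Set.Ioi 0))
          (nhds (F 0 c)) := by
        have : Filter.Tendsto (fun ε : ℝ => c + ε) (nhdsWithin 0 (Set.Ioi 0)) (nhds c) := by
          have h := (continuous_add_left c).tendsto (0 : ℝ)
          rw [add_zero] at h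
          exact h.mono_left nhdsWithin_le_nhds
        exact ((hFcont 0).tendsto c).comp this
      have := ge_of_tendsto htend (by
        filter_upwards [self_mem_nhdsWithin] with ε hε
        exact key ε hε)
      calc (Pr {ω | 2 * min (F 0 (T ω)) (1 - F 0 (T ω)) ≤ α ∧ θ * T ω < 0}).toReal
          ≤ F 0 c := this
        _ ≤ α / 2 := hcS
  · -- θ > 0 : event forces T ω < 0 and T ω ∈ S
    have hmem : ∀ ω, ω ∈ {ω | 2 * min (F 0 (T ω)) (1 - F 0 (T ω)) ≤ α ∧ θ * T ω < 0} →
        T ω ∈ S := by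
      intro ω ⟨h1, h2⟩
      have hTneg : T ω < 0 := by
        rcases lt_trichotomy (T ω) 0 with h | h | h
        · exact h
        · exfalso; rw [h, mul_zero] at h2; exact lt_irrefl 0 h2
        · exfalso; nlinarith
      have hle : F 0 (T ω) ≤ F 0 (-T ω) := hFmono 0 (by linarith)
      have hsym := hFsym (T ω)
      have hmin : min (F 0 (T ω)) (1 - F 0 (T ω)) = F 0 (T ω) :=
        min_eq_left (by linarith)
      rw [hmin] at h1
      show F 0 (T ω) ≤ α / 2
      linarith
    rcases Set.eq_empty_or_nonempty S with hemp | hne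
    · have hnull : Pr {ω | 2 * min (F 0 (T ω)) (1 - F 0 (T ω)) ≤ α ∧ θ * T ω < 0} = 0 := by
        exact measure_mono_null (fun ω hω => absurd (hmem ω hω) (by simp [hemp]))
          measure_empty
      rw [hnull, ENNReal.toReal_zero]
      positivity
    · set c := sSup S with hc
      have hcS : c ∈ S := hSclosed.csSup_mem hne hSbdd
      have hsub : {ω | 2 * min (F 0 (T ω)) (1 - F 0 (T ω)) ≤ α ∧ θ * T ω < 0} ⊆
          {ω | T ω ≤ c} := fun ω hω => le_csSup hSbdd (hmem ω hω)
      calc (Pr {ω | 2 * min (F 0 (T ω)) (1 - F 0 (T ω)) ≤ α ∧ θ * T ω < 0}).toReal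
          ≤ (Pr {ω | T ω ≤ c}).toReal :=
            ENNReal.toReal_mono (measure_ne_top _ _) (measure_mono hsub)
        _ = F θ c := hcdf c
        _ ≤ F 0 c := hstoch 0 θ hpos.le c
        _ ≤ α / 2 := hcS
end

section
/- Procedure 1 (the directional fixed sequence procedure with critical constants α_i = α/2^{i−1}) strongly controls the mdFWER at level α under arbitrary dependence: for every n, every configuration of parameters θ_1,…,θ_n ∈ ℝ, and every joint distribution of (T_1,…,T_n) whose marginals satisfy the stated assumptions, mdFWER ≤ α. -/
/-!
Under the null hypothesis the two-sided p-value is super-uniform, so `P(p_i ≤ s) ≤ s`; when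
`θ_i ≠ 0`, a wrong sign can only come from the tail opposite to the sign of `θ_i`, and the
stochastic ordering makes that one-sided probability at most `s / 2`. Peeling off `H_1`: if it is
null, every error requires rejecting it, which has probability at most `α`; otherwise an error is
either a sign error at `H_1` (probability at most `α / 2`) or an error of Procedure 1 applied to
`H_2, …, H_n` at level `α / 2`, which by induction has probability at most `α / 2`.
-/

open MeasureTheory ProbabilityTheory Filter Topology Set

section CumulativeDistribution

variable {Ω : Type*} [MeasurableSpace Ω] {μ : Measure Ω} [IsProbabilityMeasure μ]
  {X : Ω → ℝ} {G F₀ : ℝ → ℝ}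

lemma cdf_map_eq (hX : Measurable X) (hG : ∀ x, μ.real {ω | X ω ≤ x} = G x) :
    ⇑(cdf (μ.map X)) = G := by
  have := Measure.isProbabilityMeasure_map (μ := μ) hX.aemeasurable
  ext x
  rw [cdf_eq_real, map_measureReal_apply hX measurableSet_Iic, ← hG]
  rfl

lemma measureReal_le_le_eq_one_sub (hX : Measurable X) (hGc : Continuous G)
    (hG : ∀ x, μ.real {ω | X ω ≤ x} = G x) (x : ℝ) :
    μ.real {ω | x ≤ X ω} = 1 - G x := by
  have := Measure.isProbabilityMeasure_map (μ := μ) hX.aemeasurable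
  have hcdf := cdf_map_eq hX hG
  calc μ.real {ω | x ≤ X ω} = (μ.map X).real (Ici x) :=
        (map_measureReal_apply hX measurableSet_Ici).symm
    _ = ((cdf (μ.map X)).measure (Ici x)).toReal := by rw [measure_cdf]; rfl
    _ = 1 - G x := by
        rw [StieltjesFunction.measure_Ici _ (tendsto_cdf_atTop _), hcdf,
          hGc.continuousWithinAt.leftLim_eq,
          ENNReal.toReal_ofReal (sub_nonneg.2 (hcdf ▸ cdf_le_one _ x))]

lemma measureReal_neg_le_eq_one_sub (hX : Measurable X) (hGc : Continuous G)
    (hG : ∀ x, μ.real {ω | X ω ≤ x} = G x) (x : ℝ) :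
    μ.real {ω | -X ω ≤ x} = 1 - G (-x) := by
  simp_rw [neg_le]
  exact measureReal_le_le_eq_one_sub hX hGc hG (-x)

lemma measureReal_le_of_cdf_le (hX : Measurable X) (hG : ∀ x, μ.real {ω | X ω ≤ x} = G x)
    (hF₀c : Continuous F₀) (hF₀ : StrictMono F₀) (hGF : ∀ x, G x ≤ F₀ x)
    {t : ℝ} (ht₀ : 0 ≤ t) (ht₁ : t < 1) :
    μ.real {ω | F₀ (X ω) ≤ t} ≤ t := by
  have hGtop : Tendsto G atTop (𝓝 1) := cdf_map_eq hX hG ▸ tendsto_cdf_atTop _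
  -- `t` is a value of `F₀` (intermediate value theorem) unless the event is empty.
  obtain ⟨b, hb⟩ := (hGtop.eventually (eventually_gt_nhds ht₁)).exists
  by_cases hempty : ∀ a, t < F₀ a
  · simp [fun ω => (hempty (X ω)).not_ge, ht₀]
  push Not at hempty
  obtain ⟨a, ha⟩ := hempty
  obtain ⟨c, hc⟩ := intermediate_value_univ a b hF₀c ⟨ha, (hb.trans_le (hGF b)).le⟩
  calc μ.real {ω | F₀ (X ω) ≤ t} = G c := by simp_rw [← hc, hF₀.le_iff_le]; exact hG c
    _ ≤ t := hc ▸ hGF c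

end CumulativeDistribution

def twoSidedPValue (F₀ : ℝ → ℝ) (x : ℝ) : ℝ := 2 * min (F₀ x) (1 - F₀ x)

lemma twoSidedPValue_le_iff {F₀ : ℝ → ℝ} (hsym : ∀ x, F₀ (-x) = 1 - F₀ x) {x s : ℝ} :
    twoSidedPValue F₀ x ≤ s ↔ F₀ x ≤ s / 2 ∨ F₀ (-x) ≤ s / 2 := by
  rw [twoSidedPValue, hsym, ← le_div_iff₀' two_pos, min_le_iff]

section SingleTest

variable {Ω : Type*} [MeasurableSpace Ω] {μ : Measure Ω} [IsProbabilityMeasure μ]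
  {X : Ω → ℝ} {G F₀ : ℝ → ℝ}

lemma measureReal_twoSidedPValue_le (hX : Measurable X) (hF₀c : Continuous F₀)
    (hF₀ : StrictMono F₀) (hsym : ∀ x, F₀ (-x) = 1 - F₀ x)
    (hcdf : ∀ x, μ.real {ω | X ω ≤ x} = F₀ x) {s : ℝ} (hs₀ : 0 ≤ s) (hs : s < 2) :
    μ.real {ω | twoSidedPValue F₀ (X ω) ≤ s} ≤ s := by
  have hcdf_neg (x : ℝ) : μ.real {ω | -X ω ≤ x} = F₀ x := by
    rw [measureReal_neg_le_eq_one_sub hX hF₀c hcdf, hsym, sub_sub_cancel]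
  have hlower := measureReal_le_of_cdf_le hX hcdf hF₀c hF₀ (fun _ => le_rfl)
    (t := s / 2) (by positivity) (by linarith)
  have hupper := measureReal_le_of_cdf_le hX.neg hcdf_neg hF₀c hF₀ (fun _ => le_rfl)
    (t := s / 2) (by positivity) (by linarith)
  calc μ.real {ω | twoSidedPValue F₀ (X ω) ≤ s}
      ≤ μ.real ({ω | F₀ (X ω) ≤ s / 2} ∪ {ω | F₀ (-X ω) ≤ s / 2}) :=
        measureReal_mono fun ω hω => (twoSidedPValue_le_iff hsym).1 hω
    _ ≤ s / 2 + s / 2 := (measureReal_union_le _ _).trans (add_le_add hlower hupper)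
    _ = s := add_halves s

/-- A directional claim errs only in the tail pointing away from the true sign of `θ`, so its
error probability is half the level. -/
lemma measureReal_twoSidedPValue_le_and_mul_neg_le (hX : Measurable X) (hGc : Continuous G)
    (hG : ∀ x, μ.real {ω | X ω ≤ x} = G x) (hF₀c : Continuous F₀) (hF₀ : StrictMono F₀)
    (hsym : ∀ x, F₀ (-x) = 1 - F₀ x) {θ : ℝ} (hpos : 0 < θ → ∀ x, G x ≤ F₀ x)
    (hneg : θ < 0 → ∀ x, F₀ x ≤ G x) {s : ℝ} (hs₀ : 0 ≤ s) (hs : s < 2) :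
    μ.real {ω | twoSidedPValue F₀ (X ω) ≤ s ∧ θ * X ω < 0} ≤ s / 2 := by
  rcases lt_trichotomy θ 0 with hθ | rfl | hθ
  · have hG_neg (x : ℝ) : μ.real {ω | -X ω ≤ x} = 1 - G (-x) :=
      measureReal_neg_le_eq_one_sub hX hGc hG x
    have hG_negF (x : ℝ) : 1 - G (-x) ≤ F₀ x := by linarith [hneg hθ (-x), hsym x]
    refine (measureReal_mono (s₂ := {ω | F₀ (-X ω) ≤ s / 2}) fun ω (⟨hp, hd⟩ : _ ∧ _) => ?_).trans
      (measureReal_le_of_cdf_le hX.neg hG_neg hF₀c hF₀ hG_negF (by positivity) (by linarith))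
    have hXpos : 0 < X ω := pos_of_mul_neg_right hd hθ.le
    exact ((twoSidedPValue_le_iff hsym).1 hp).elim
      (fun h => (hF₀ (by linarith : -X ω < X ω)).le.trans h) id
  · simp
    positivity
  · refine (measureReal_mono (s₂ := {ω | F₀ (X ω) ≤ s / 2}) fun ω (⟨hp, hd⟩ : _ ∧ _) => ?_).trans
      (measureReal_le_of_cdf_le hX hG hF₀c hF₀ (hpos hθ) (by positivity) (by linarith))
    have hXneg : X ω < 0 := neg_of_mul_neg_right hd hθ.le
    exact ((twoSidedPValue_le_iff hsym).1 hp).elim id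
      (fun h => (hF₀ (by linarith : X ω < -X ω)).le.trans h)

end SingleTest

section FixedSequence

variable {Ω : Type*}

/-- `A j` is the event that `H_j` passes its test, `E i` the event that rejecting `H_i` is an
error. -/
def fixedSequenceError {n : ℕ} (A E : Fin n → Set Ω) : Set Ω :=
  {ω | ∃ i, (∀ j ≤ i, ω ∈ A j) ∧ ω ∈ E i}

lemma fixedSequenceError_succ_subset {n : ℕ} (A E : Fin (n + 1) → Set Ω) :
    fixedSequenceError A E ⊆
      A 0 ∩ E 0 ∪ fixedSequenceError (fun j => A j.succ) (fun i => E i.succ) := by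
  rintro ω ⟨i, hA, hE⟩
  induction i using Fin.cases with
  | zero => exact Or.inl ⟨hA 0 le_rfl, hE⟩
  | succ i => exact Or.inr ⟨i, fun j hj => hA j.succ (Fin.succ_le_succ_iff.2 hj), hE⟩

variable [MeasurableSpace Ω] {μ : Measure Ω} [IsFiniteMeasure μ]

theorem measureReal_fixedSequenceError_le :
    ∀ {n : ℕ} (A E : Fin n → Set Ω) {β : ℝ}, 0 ≤ β →
      (∀ i, μ.real (A i) ≤ β / 2 ^ (i : ℕ) ∨ μ.real (A i ∩ E i) ≤ β / 2 ^ (i : ℕ) / 2) →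
      μ.real (fixedSequenceError A E) ≤ β
  | 0, A, E, β, hβ, _ => by simp [fixedSequenceError, hβ]
  | n + 1, A, E, β, hβ, h => by
    have ih := measureReal_fixedSequenceError_le (fun j => A j.succ) (fun i => E i.succ)
      (β := β / 2) (by positivity) fun i => by simpa [pow_succ', div_div] using h i.succ
    rcases h 0 with h₀ | h₀
    · calc μ.real (fixedSequenceError A E) ≤ μ.real (A 0) :=
            measureReal_mono fun _ ⟨i, hA, _⟩ => hA 0 (Fin.zero_le i)
        _ ≤ β := by simpa using h₀
    · calc μ.real (fixedSequenceError A E)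
          ≤ μ.real (A 0 ∩ E 0) + μ.real (fixedSequenceError _ _) :=
            (measureReal_mono (fixedSequenceError_succ_subset A E)).trans (measureReal_union_le _ _)
        _ ≤ β / 2 + β / 2 := add_le_add (by simpa using h₀) ih
        _ = β := add_halves β

end FixedSequence

theorem procedure1_controls_mdFWER_arbitrary_dependence_general
    {Ω : Type*} [MeasurableSpace Ω] (Pr : Measure Ω) [IsProbabilityMeasure Pr]
    (F : ℝ → ℝ → ℝ)
    (hFcont : ∀ θ, Continuous (F θ))
    (hF0strict : StrictMono (F 0))
    (hFsym : ∀ x : ℝ, F 0 (-x) = 1 - F 0 x)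
    (hstoch : ∀ θ θ' : ℝ, θ ≤ θ' → ∀ x, F θ' x ≤ F θ x)
    (n : ℕ) (θ : Fin n → ℝ) (T : Fin n → Ω → ℝ)
    (hT : ∀ i, Measurable (T i))
    (hcdf : ∀ i x, (Pr {ω | T i ω ≤ x}).toReal = F (θ i) x)
    (α : ℝ) (hα : α ∈ Set.Ioo (0 : ℝ) 1) :
    (Pr {ω | ∃ i : Fin n,
        (∀ j : Fin n, j ≤ i →
          2 * min (F 0 (T j ω)) (1 - F 0 (T j ω)) ≤ α / 2 ^ (j : ℕ)) ∧
        (θ i = 0 ∨ (θ i ≠ 0 ∧ θ i * T i ω < 0))}).toReal ≤ α := by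
  obtain ⟨hα₀, hα₁⟩ := hα
  refine measureReal_fixedSequenceError_le (μ := Pr)
    (fun j => {ω | twoSidedPValue (F 0) (T j ω) ≤ α / 2 ^ (j : ℕ)})
    (fun i => {ω | θ i = 0 ∨ (θ i ≠ 0 ∧ θ i * T i ω < 0)}) hα₀.le fun i => ?_
  have hs₀ : 0 ≤ α / 2 ^ (i : ℕ) := by positivity
  have hs : α / 2 ^ (i : ℕ) < 2 :=
    (div_le_self hα₀.le (one_le_pow₀ one_le_two)).trans_lt (hα₁.trans one_lt_two)
  rcases eq_or_ne (θ i) 0 with hnull | hnonnull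
  · left
    exact measureReal_twoSidedPValue_le (hT i) (hFcont 0) hF0strict hFsym
      (fun x => hnull ▸ hcdf i x) hs₀ hs
  · right
    refine (measureReal_mono (s₂ := {ω | twoSidedPValue (F 0) (T i ω) ≤ α / 2 ^ (i : ℕ) ∧
      θ i * T i ω < 0}) fun ω (⟨hp, he⟩ : _ ∧ _) => ⟨hp, (he.resolve_left hnonnull).2⟩).trans ?_
    exact measureReal_twoSidedPValue_le_and_mul_neg_le (hT i) (hFcont (θ i)) (hcdf i) (hFcont 0)
      hF0strict hFsym (fun h => hstoch 0 (θ i) h.le) (fun h => hstoch (θ i) 0 h.le) hs₀ hs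

/-- Procedure 1 (directional fixed sequence procedure with critical
constants α_i = α/2^(i-1)) strongly controls the mdFWER at level α under arbitrary
dependence of the test statistics. -/
theorem procedure1_controls_mdFWER_arbitrary_dependence
    {Ω : Type*} [MeasurableSpace Ω] (Pr : Measure Ω) [IsProbabilityMeasure Pr]
    (F : ℝ → ℝ → ℝ)
    (hFcont : ∀ θ, Continuous (F θ))
    (hFmono : ∀ θ, Monotone (F θ))
    (hF0strict : StrictMono (F 0))
    (hFsym : ∀ x : ℝ, F 0 (-x) = 1 - F 0 x)
    (hstoch : ∀ θ θ' : ℝ, θ ≤ θ' → ∀ x, F θ' x ≤ F θ x)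
    (n : ℕ) (θ : Fin n → ℝ) (T : Fin n → Ω → ℝ)
    (hT : ∀ i, Measurable (T i))
    (hcdf : ∀ i x, (Pr {ω | T i ω ≤ x}).toReal = F (θ i) x)
    (α : ℝ) (hα : α ∈ Set.Ioo (0 : ℝ) 1) :
    (Pr {ω | ∃ i : Fin n,
        (∀ j : Fin n, j ≤ i →
          2 * min (F 0 (T j ω)) (1 - F 0 (T j ω)) ≤ α / 2 ^ (j : ℕ)) ∧
        (θ i = 0 ∨ (θ i ≠ 0 ∧ θ i * T i ω < 0))}).toReal ≤ α :=
  procedure1_controls_mdFWER_arbitrary_dependence_general Pr F hFcont hF0strict hFsym hstoch n θ T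
    hT hcdf α hα
end

section
/- Under arbitrary dependence of (T_1,…,T_n), Procedure 2 (the directional fixed sequence procedure with constant critical value α at every step) satisfies mdFWER ≤ (n+1)·α/2. Consequently, the directional fixed sequence procedure with common critical constant 2α/(n+1) at every step satisfies mdFWER ≤ α for every joint distribution of (T_1,…,T_n) with the stated marginals and every configuration of parameters θ_1,…,θ_n. -/
open MeasureTheory ProbabilityTheory Filter Topology

private lemma mdFWER_main_bound
    {Ω : Type*} [MeasurableSpace Ω] (Pr : Measure Ω) [IsProbabilityMeasure Pr]
    (F : ℝ → ℝ → ℝ)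
    (hFcont : ∀ θ, Continuous (F θ))
    (hFmono : ∀ θ, Monotone (F θ))
    (hFsym : ∀ x : ℝ, F 0 (-x) = 1 - F 0 x)
    (hstoch : ∀ θ θ' : ℝ, θ ≤ θ' → ∀ x, F θ' x ≤ F θ x)
    (n : ℕ) (θ : Fin n → ℝ) (T : Fin n → Ω → ℝ)
    (hT : ∀ i, Measurable (T i))
    (hcdf : ∀ i x, (Pr {ω | T i ω ≤ x}).toReal = F (θ i) x)
    (a : ℝ) (ha : a ∈ Set.Ioo (0 : ℝ) 1) :
    (Pr {ω | ∃ i : Fin n,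
        (∀ j : Fin n, j ≤ i →
          2 * min (F 0 (T j ω)) (1 - F 0 (T j ω)) ≤ a) ∧
        (θ i = 0 ∨ (θ i ≠ 0 ∧ θ i * T i ω < 0))}).toReal ≤ (n + 1) * a / 2 := by
  obtain ⟨ha0, ha1⟩ := ha
  set s : ℝ := a / 2 with hs
  have hs0 : 0 < s := by positivity
  have hshalf : s < 1 / 2 := by rw [hs]; linarith
  have hF00 : F 0 0 = 1 / 2 := by
    have := hFsym 0; rw [neg_zero] at this; linarith
  set E : Set Ω := {ω | ∃ i : Fin n,
        (∀ j : Fin n, j ≤ i →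
          2 * min (F 0 (T j ω)) (1 - F 0 (T j ω)) ≤ a) ∧
        (θ i = 0 ∨ (θ i ≠ 0 ∧ θ i * T i ω < 0))} with hE
  by_cases hL : ∃ x, F 0 x ≤ s
  · -- nondegenerate case: the sublevel set {x | F 0 x ≤ s} is (-∞, b]
    have hclosed : IsClosed {x : ℝ | F 0 x ≤ s} := isClosed_le (hFcont 0) continuous_const
    have hbdd : BddAbove {x : ℝ | F 0 x ≤ s} := by
      refine ⟨0, fun x hx => ?_⟩
      by_contra h
      push_neg at h
      have := hFmono 0 (le_of_lt h)
      rw [hF00] at this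
      simp only [Set.mem_setOf_eq] at hx
      linarith
    set b : ℝ := sSup {x : ℝ | F 0 x ≤ s} with hb
    have hbmem : b ∈ {x : ℝ | F 0 x ≤ s} := hclosed.csSup_mem hL hbdd
    have hFb : F 0 b ≤ s := hbmem
    have hbneg : b < 0 := by
      by_contra h
      push_neg at h
      have := hFmono 0 h
      rw [hF00] at this
      linarith
    have hbiff : ∀ x : ℝ, F 0 x ≤ s ↔ x ≤ b := by
      intro x
      constructor
      · intro hx; exact le_csSup hbdd hx
      · intro hx; exact le_trans (hFmono 0 hx) hFb
    -- key equivalence for the p-value condition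
    have hmin : ∀ t : ℝ, 2 * min (F 0 t) (1 - F 0 t) ≤ a → (t ≤ b ∨ -b ≤ t) := by
      intro t h
      have h' : min (F 0 t) (1 - F 0 t) ≤ s := by rw [hs]; linarith
      rcases min_le_iff.1 h' with h1 | h2
      · exact Or.inl ((hbiff t).1 h1)
      · right
        have : F 0 (-t) ≤ s := by rw [hFsym t]; linarith
        have := (hbiff (-t)).1 this
        linarith
    -- CDF facts
    have hFnonneg : ∀ i x, 0 ≤ F (θ i) x := by
      intro i x; rw [← hcdf i x]; exact ENNReal.toReal_nonneg
    -- tail probability bounds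
    have hB1 : ∀ i : Fin n, 0 ≤ θ i → (Pr {ω | T i ω ≤ b}).toReal ≤ s := by
      intro i hi
      rw [hcdf i b]
      exact le_trans (hstoch 0 (θ i) hi b) hFb
    have hge : ∀ (i : Fin n) (x : ℝ), (Pr {ω | x ≤ T i ω}).toReal ≤ 1 - F (θ i) x := by
      intro i x
      have key : ∀ ε : ℝ, 0 < ε → (Pr {ω | x ≤ T i ω}).toReal ≤ 1 - F (θ i) (x - ε) := by
        intro ε hε
        have hms : MeasurableSet {ω | T i ω ≤ x - ε} :=
          (hT i) measurableSet_Iic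
        have hsub : {ω | x ≤ T i ω} ⊆ {ω | T i ω ≤ x - ε}ᶜ := by
          intro ω hω hω'
          simp only [Set.mem_setOf_eq] at hω hω'
          linarith
        have hcompl : Pr {ω | T i ω ≤ x - ε}ᶜ = 1 - Pr {ω | T i ω ≤ x - ε} :=
          prob_compl_eq_one_sub hms
        have h1 : (Pr {ω | x ≤ T i ω}).toReal ≤ (Pr {ω | T i ω ≤ x - ε}ᶜ).toReal :=
          ENNReal.toReal_mono (measure_ne_top Pr _) (measure_mono hsub)
        have h2 : (Pr {ω | T i ω ≤ x - ε}ᶜ).toReal = 1 - F (θ i) (x - ε) := by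
          rw [hcompl, ENNReal.toReal_sub_of_le prob_le_one ENNReal.one_ne_top,
            ENNReal.toReal_one, hcdf i (x - ε)]
        linarith [h1, h2.le, h2.ge]
      have htend : Tendsto (fun ε : ℝ => 1 - F (θ i) (x - ε)) (𝓝[>] (0:ℝ))
          (𝓝 (1 - F (θ i) x)) := by
        have h1 : Tendsto (fun ε : ℝ => x - ε) (𝓝[>] (0:ℝ)) (𝓝 x) := by
          have : Tendsto (fun ε : ℝ => x - ε) (𝓝 (0:ℝ)) (𝓝 (x - 0)) :=
            (continuous_const.sub continuous_id).tendsto 0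
          rw [sub_zero] at this
          exact this.mono_left nhdsWithin_le_nhds
        have h2 : Tendsto (fun ε : ℝ => F (θ i) (x - ε)) (𝓝[>] (0:ℝ)) (𝓝 (F (θ i) x)) :=
          ((hFcont (θ i)).tendsto x).comp h1
        exact tendsto_const_nhds.sub h2
      exact ge_of_tendsto htend
        (eventually_nhdsWithin_of_forall (fun ε hε => key ε hε))
    have hB2 : ∀ i : Fin n, θ i ≤ 0 → (Pr {ω | -b ≤ T i ω}).toReal ≤ s := by
      intro i hi
      have h1 := hge i (-b)
      have h2 : F 0 (-b) ≤ F (θ i) (-b) := hstoch (θ i) 0 hi (-b)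
      have h3 : F 0 (-b) = 1 - F 0 b := hFsym b
      linarith [hFb]
    -- split on existence of a null index
    by_cases hnull : ∃ i : Fin n, θ i = 0
    · -- minimal null index
      have hSne : (Finset.univ.filter (fun i : Fin n => θ i = 0)).Nonempty := by
        obtain ⟨i, hi⟩ := hnull
        exact ⟨i, Finset.mem_filter.2 ⟨Finset.mem_univ i, hi⟩⟩
      set m : Fin n := (Finset.univ.filter (fun i : Fin n => θ i = 0)).min' hSne with hm
      have hmnull : θ m = 0 :=
        (Finset.mem_filter.1 ((Finset.univ.filter (fun i : Fin n => θ i = 0)).min'_mem hSne)).2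
      have hmmin : ∀ i : Fin n, θ i = 0 → m ≤ i := by
        intro i hi
        exact Finset.min'_le _ i (Finset.mem_filter.2 ⟨Finset.mem_univ i, hi⟩)
      set C : Fin n → Set Ω := fun i =>
        if i = m then {ω | T i ω ≤ b} ∪ {ω | -b ≤ T i ω}
        else if i < m then (if 0 < θ i then {ω | T i ω ≤ b} else {ω | -b ≤ T i ω})
        else ∅ with hC
      have hcover : E ⊆ ⋃ i, C i := by
        intro ω hω
        obtain ⟨i, hchain, herr⟩ := hω
        rcases lt_or_ge i m with him | him
        · -- i < m, so θ i ≠ 0, type 3 error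
          have hine : θ i ≠ 0 := by
            intro h
            exact absurd (hmmin i h) (not_le.2 him)
          have herr' : θ i * T i ω < 0 := by
            rcases herr with h | ⟨_, h⟩
            · exact absurd h hine
            · exact h
          have htail := hmin (T i ω) (hchain i le_rfl)
          refine Set.mem_iUnion.2 ⟨i, ?_⟩
          have hinm : i ≠ m := ne_of_lt him
          rcases hine.lt_or_gt with hneg | hpos
          · -- θ i < 0, so T i ω > 0
            have hTpos : 0 < T i ω := by nlinarith
            have : -b ≤ T i ω := by
              rcases htail with h | h
              · linarith
              · exact h
            simp only [hC, if_neg hinm, if_pos him, if_neg (not_lt.2 hneg.le)]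
            exact this
          · -- θ i > 0, so T i ω < 0
            have hTneg : T i ω < 0 := by nlinarith
            have : T i ω ≤ b := by
              rcases htail with h | h
              · exact h
              · linarith
            simp only [hC, if_neg hinm, if_pos him, if_pos hpos]
            exact this
        · -- m ≤ i : use the condition at index m
          have htail := hmin (T m ω) (hchain m him)
          refine Set.mem_iUnion.2 ⟨m, ?_⟩
          simp only [hC, if_pos rfl]
          exact htail
      have hCbound : ∀ i : Fin n, (Pr (C i)).toReal ≤ s + (if i = m then s else 0) := by
        intro i
        by_cases him : i = m
        · have hθi : θ i = 0 := by rw [him]; exact hmnull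
          have hCi : C i = {ω | T i ω ≤ b} ∪ {ω | -b ≤ T i ω} := by
            simp only [hC, if_pos him]
          rw [hCi, if_pos him]
          have hu : Pr ({ω | T i ω ≤ b} ∪ {ω | -b ≤ T i ω})
              ≤ Pr {ω | T i ω ≤ b} + Pr {ω | -b ≤ T i ω} := measure_union_le _ _
          have h1 : (Pr ({ω | T i ω ≤ b} ∪ {ω | -b ≤ T i ω})).toReal
              ≤ (Pr {ω | T i ω ≤ b} + Pr {ω | -b ≤ T i ω}).toReal :=
            ENNReal.toReal_mono (by finiteness) hu
          rw [ENNReal.toReal_add (measure_ne_top Pr _) (measure_ne_top Pr _)] at h1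
          have h2 := hB1 i (le_of_eq hθi.symm)
          have h3 := hB2 i (le_of_eq hθi)
          linarith
        · simp only [hC, if_neg him]
          by_cases him2 : i < m
          · simp only [if_pos him2, if_neg him]
            by_cases hpos : 0 < θ i
            · simp only [if_pos hpos]
              have := hB1 i hpos.le
              linarith
            · simp only [if_neg hpos]
              push_neg at hpos
              have := hB2 i hpos
              linarith
          · simp only [if_neg him2, if_neg him, measure_empty, ENNReal.toReal_zero]
            linarith
      have h1 : Pr E ≤ ∑ i : Fin n, Pr (C i) := by
        calc Pr E ≤ Pr (⋃ i, C i) := measure_mono hcover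
          _ ≤ ∑' i, Pr (C i) := measure_iUnion_le C
          _ = ∑ i : Fin n, Pr (C i) := tsum_fintype _
      have h2 : (Pr E).toReal ≤ ∑ i : Fin n, (Pr (C i)).toReal := by
        have := ENNReal.toReal_mono
          (ENNReal.sum_ne_top.2 (fun i _ => measure_ne_top Pr _)) h1
        rwa [ENNReal.toReal_sum (fun i _ => measure_ne_top Pr _)] at this
      have h3 : ∑ i : Fin n, (Pr (C i)).toReal
          ≤ ∑ i : Fin n, (s + (if i = m then s else 0)) :=
        Finset.sum_le_sum (fun i _ => hCbound i)
      have h4 : ∑ i : Fin n, (s + (if i = m then s else 0)) = n * s + s := by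
        rw [Finset.sum_add_distrib, Finset.sum_const, Finset.card_univ, Fintype.card_fin,
          Finset.sum_ite_eq' Finset.univ m (fun _ => s), if_pos (Finset.mem_univ m),
          nsmul_eq_mul]
      have h5 : (n : ℝ) * s + s = (n + 1) * a / 2 := by rw [hs]; ring
      linarith
    · -- no null index: type 3 errors only
      push_neg at hnull
      set C : Fin n → Set Ω := fun i =>
        if 0 < θ i then {ω | T i ω ≤ b} else {ω | -b ≤ T i ω} with hC
      have hcover : E ⊆ ⋃ i, C i := by
        intro ω hω
        obtain ⟨i, hchain, herr⟩ := hω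
        have herr' : θ i * T i ω < 0 := by
          rcases herr with h | ⟨_, h⟩
          · exact absurd h (hnull i)
          · exact h
        have htail := hmin (T i ω) (hchain i le_rfl)
        refine Set.mem_iUnion.2 ⟨i, ?_⟩
        rcases (hnull i).lt_or_gt with hneg | hpos
        · have hTpos : 0 < T i ω := by nlinarith
          have : -b ≤ T i ω := by
            rcases htail with h | h
            · linarith
            · exact h
          simp only [hC, if_neg (not_lt.2 hneg.le)]
          exact this
        · have hTneg : T i ω < 0 := by nlinarith
          have : T i ω ≤ b := by
            rcases htail with h | h
            · exact h
            · linarith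
          simp only [hC, if_pos hpos]
          exact this
      have hCbound : ∀ i : Fin n, (Pr (C i)).toReal ≤ s := by
        intro i
        by_cases hpos : 0 < θ i
        · simp only [hC, if_pos hpos]
          exact hB1 i hpos.le
        · simp only [hC, if_neg hpos]
          push_neg at hpos
          exact hB2 i hpos
      have h1 : Pr E ≤ ∑ i : Fin n, Pr (C i) := by
        calc Pr E ≤ Pr (⋃ i, C i) := measure_mono hcover
          _ ≤ ∑' i, Pr (C i) := measure_iUnion_le C
          _ = ∑ i : Fin n, Pr (C i) := tsum_fintype _
      have h2 : (Pr E).toReal ≤ ∑ i : Fin n, (Pr (C i)).toReal := by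
        have := ENNReal.toReal_mono
          (ENNReal.sum_ne_top.2 (fun i _ => measure_ne_top Pr _)) h1
        rwa [ENNReal.toReal_sum (fun i _ => measure_ne_top Pr _)] at this
      have h3 : ∑ i : Fin n, (Pr (C i)).toReal ≤ ∑ i : Fin n, s :=
        Finset.sum_le_sum (fun i _ => hCbound i)
      have h4 : ∑ i : Fin n, s = n * s := by
        rw [Finset.sum_const, Finset.card_univ, Fintype.card_fin, nsmul_eq_mul]
      have h5 : (n : ℝ) * s ≤ (n + 1) * a / 2 := by
        rw [hs]
        have : (0:ℝ) ≤ n := Nat.cast_nonneg n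
        nlinarith
      linarith
  · -- degenerate case : the event is empty
    push_neg at hL
    have hempty : E = ∅ := by
      rw [Set.eq_empty_iff_forall_notMem]
      rintro ω ⟨i, hchain, -⟩
      have h := hchain i le_rfl
      have h' : min (F 0 (T i ω)) (1 - F 0 (T i ω)) ≤ s := by rw [hs]; linarith
      rcases min_le_iff.1 h' with h1 | h2
      · exact absurd h1 (not_le.2 (hL _))
      · have : F 0 (-(T i ω)) ≤ s := by rw [hFsym]; linarith
        exact absurd this (not_le.2 (hL _))
    rw [hempty]
    simp only [measure_empty, ENNReal.toReal_zero]
    positivity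

/-- Under arbitrary dependence, Procedure 2 (constant critical value α)
satisfies mdFWER ≤ (n+1)·α/2; consequently the directional fixed sequence procedure
with common critical constant 2α/(n+1) satisfies mdFWER ≤ α. -/
theorem procedure2_mdFWER_bound_arbitrary_dependence
    {Ω : Type*} [MeasurableSpace Ω] (Pr : Measure Ω) [IsProbabilityMeasure Pr]
    (F : ℝ → ℝ → ℝ)
    (hFcont : ∀ θ, Continuous (F θ))
    (hFmono : ∀ θ, Monotone (F θ))
    (hF0strict : StrictMono (F 0))
    (hFsym : ∀ x : ℝ, F 0 (-x) = 1 - F 0 x)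
    (hstoch : ∀ θ θ' : ℝ, θ ≤ θ' → ∀ x, F θ' x ≤ F θ x)
    (n : ℕ) (θ : Fin n → ℝ) (T : Fin n → Ω → ℝ)
    (hT : ∀ i, Measurable (T i))
    (hcdf : ∀ i x, (Pr {ω | T i ω ≤ x}).toReal = F (θ i) x)
    (α : ℝ) (hα : α ∈ Set.Ioo (0 : ℝ) 1) :
    (Pr {ω | ∃ i : Fin n,
        (∀ j : Fin n, j ≤ i →
          2 * min (F 0 (T j ω)) (1 - F 0 (T j ω)) ≤ α) ∧
        (θ i = 0 ∨ (θ i ≠ 0 ∧ θ i * T i ω < 0))}).toReal ≤ (n + 1) * α / 2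
    ∧
    (Pr {ω | ∃ i : Fin n,
        (∀ j : Fin n, j ≤ i →
          2 * min (F 0 (T j ω)) (1 - F 0 (T j ω)) ≤ 2 * α / (n + 1)) ∧
        (θ i = 0 ∨ (θ i ≠ 0 ∧ θ i * T i ω < 0))}).toReal ≤ α := by
  constructor
  · exact mdFWER_main_bound Pr F hFcont hFmono hFsym hstoch n θ T hT hcdf α hα
  · rcases Nat.eq_zero_or_pos n with hn | hn
    · subst hn
      have : {ω : Ω | ∃ i : Fin 0,
          (∀ j : Fin 0, j ≤ i →
            2 * min (F 0 (T j ω)) (1 - F 0 (T j ω)) ≤ 2 * α / (((0:ℕ):ℝ) + 1)) ∧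
          (θ i = 0 ∨ (θ i ≠ 0 ∧ θ i * T i ω < 0))} = ∅ := by
        rw [Set.eq_empty_iff_forall_notMem]
        rintro ω ⟨i, -⟩
        exact i.elim0
      rw [this]
      simp only [measure_empty, ENNReal.toReal_zero]
      exact hα.1.le
    · have hn1 : (1:ℝ) ≤ n := by exact_mod_cast hn
      have ha' : 2 * α / (n + 1) ∈ Set.Ioo (0:ℝ) 1 := by
        constructor
        · exact div_pos (by linarith [hα.1]) (by positivity)
        · rw [div_lt_one (by linarith : (0:ℝ) < (n:ℝ) + 1)]
          linarith [hα.2]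
      have := mdFWER_main_bound Pr F hFcont hFmono hFsym hstoch n θ T hT hcdf
        (2 * α / (n + 1)) ha'
      have heq : ((n:ℝ) + 1) * (2 * α / (n + 1)) / 2 = α := by
        field_simp
      linarith
end

section
/- Fix α ∈ (0,1) and an integer k ≥ 1, and let q_i be the unique real number with Φ(q_i) = 1 − α/2^i for i = 1,…,k. Suppose Z_1,…,Z_k are random variables such that Z_k has the standard normal distribution and Φ(Z_i) = |2Φ(Z_{i+1}) − 1| almost surely for i = 1,…,k−1. Then Σ_{j=1}^{k−1} Pr(Z_1 ≥ q_1, …, Z_{j−1} ≥ q_{j−1}, Z_j ≤ −q_j) + Pr(Z_1 ≥ q_1, …, Z_{k−1} ≥ q_{k−1}, Z_k ∉ (−q_k, q_k)) = α. (Each summand equals α/2^j and the last term equals α/2^{k−1}; this exhibits a joint distribution showing that the critical constants α/2^{i−1} of the directional fixed sequence procedure under arbitrary dependence cannot be increased.) -/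
open MeasureTheory ProbabilityTheory Set Filter

noncomputable def Φ₀ : ℝ → ℝ := fun x => cdf (gaussianReal 0 1) x

lemma Φ₀_apply (x : ℝ) : Φ₀ x = cdf (gaussianReal 0 1) x := rfl

lemma gauss_Iic (x : ℝ) : gaussianReal 0 1 (Iic x) = ENNReal.ofReal (Φ₀ x) :=
  (ofReal_cdf _ x).symm

lemma gauss_singleton (x : ℝ) : gaussianReal 0 1 {x} = 0 :=
  gaussianReal_absolutelyContinuous 0 one_ne_zero (Real.volume_singleton)

lemma gauss_Iio (x : ℝ) : gaussianReal 0 1 (Iio x) = ENNReal.ofReal (Φ₀ x) := by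
  rw [← gauss_Iic, ← Iio_union_right,
    measure_union (by simp) (measurableSet_singleton x), gauss_singleton, add_zero]

lemma gauss_pos {a b : ℝ} (hab : a < b) : gaussianReal 0 1 (Ioc a b) ≠ 0 := by
  intro h
  have := gaussianReal_absolutelyContinuous' 0 one_ne_zero h
  rw [Real.volume_Ioc] at this
  simp only [ENNReal.ofReal_eq_zero] at this
  linarith

lemma Φ₀_mono : Monotone Φ₀ := monotone_cdf _

lemma Φ₀_strictMono : StrictMono Φ₀ := by
  intro a b hab
  by_contra hle
  push_neg at hle
  have h1 : gaussianReal 0 1 (Iic a) + gaussianReal 0 1 (Ioc a b) = gaussianReal 0 1 (Iic b) := by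
    rw [← measure_union (Iic_disjoint_Ioc le_rfl) measurableSet_Ioc,
      Iic_union_Ioc_eq_Iic hab.le]
  have h2 : gaussianReal 0 1 (Iic b) ≤ gaussianReal 0 1 (Iic a) := by
    rw [gauss_Iic, gauss_Iic]; exact ENNReal.ofReal_le_ofReal hle
  have h3 : gaussianReal 0 1 (Iic a) ≠ ⊤ := measure_ne_top _ _
  have := gauss_pos hab
  rw [← h1] at h2
  have h4 : gaussianReal 0 1 (Ioc a b) = 0 := by
    by_contra h0
    exact absurd h2 (not_le.2 (ENNReal.lt_add_right h3 h0))
  exact this h4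

lemma Φ₀_continuous : Continuous Φ₀ := by
  rw [continuous_iff_continuousAt]
  intro x
  have hmono : Monotone Φ₀ := Φ₀_mono
  rw [hmono.continuousAt_iff_leftLim_eq_rightLim]
  have hr : Function.rightLim Φ₀ x = Φ₀ x := by
    rw [← hmono.continuousWithinAt_Ioi_iff_rightLim_eq]
    exact ((cdf (gaussianReal 0 1)).right_continuous x).mono Ioi_subset_Ici_self
  have hsing : (cdf (gaussianReal 0 1)).measure {x} = 0 := by
    rw [measure_cdf]; exact gauss_singleton x
  rw [StieltjesFunction.measure_singleton] at hsing
  have hl : Function.leftLim Φ₀ x = Φ₀ x := by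
    have h1 : Function.leftLim Φ₀ x ≤ Φ₀ x := hmono.leftLim_le le_rfl
    have h2 : cdf (gaussianReal 0 1) x - Function.leftLim (⇑(cdf (gaussianReal 0 1))) x ≤ 0 := by
      by_contra h
      push_neg at h
      rw [ENNReal.ofReal_eq_zero] at hsing
      linarith
    have heq : Function.leftLim Φ₀ x = Function.leftLim (⇑(cdf (gaussianReal 0 1))) x := rfl
    rw [heq] at h1 ⊢
    rw [Φ₀_apply] at h1 ⊢
    linarith
  rw [hl, hr]

lemma Φ₀_surj {t : ℝ} (h0 : 0 < t) (h1 : t < 1) : ∃ s, Φ₀ s = t := by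
  obtain ⟨a, ha⟩ := ((tendsto_cdf_atBot (gaussianReal 0 1)).eventually_lt_const h0).exists
  obtain ⟨b, hb⟩ := ((tendsto_cdf_atTop (gaussianReal 0 1)).eventually_const_lt h1).exists
  rw [← Φ₀_apply] at ha hb
  have hab : a ≤ b := by
    by_contra h
    push_neg at h
    have := Φ₀_mono h.le
    linarith
  obtain ⟨s, _, hs⟩ := intermediate_value_Icc hab Φ₀_continuous.continuousOn
    (⟨ha.le, hb.le⟩ : t ∈ Icc (Φ₀ a) (Φ₀ b))
  exact ⟨s, hs⟩

lemma gauss_map_neg : (gaussianReal 0 1).map (fun x => -x) = gaussianReal 0 1 := by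
  have h : (fun x : ℝ => -x) = (fun x => (-1 : ℝ) * x) := by funext x; ring
  rw [h, gaussianReal_map_const_mul]
  norm_num

lemma Φ₀_symm (x : ℝ) : Φ₀ (-x) = 1 - Φ₀ x := by
  have h1 : gaussianReal 0 1 (Iic (-x)) = gaussianReal 0 1 (Ici x) := by
    conv_lhs => rw [← gauss_map_neg]
    rw [Measure.map_apply measurable_neg measurableSet_Iic]
    congr 1
    ext y
    simp
  have h2 : gaussianReal 0 1 (Ici x) = 1 - ENNReal.ofReal (Φ₀ x) := by
    rw [← compl_Iio, prob_compl_eq_one_sub measurableSet_Iio, gauss_Iio]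
  have h3 : ENNReal.ofReal (Φ₀ (-x)) = ENNReal.ofReal (1 - Φ₀ x) := by
    rw [← gauss_Iic, h1, h2, ENNReal.ofReal_sub _ (by rw [Φ₀_apply]; exact cdf_nonneg _ x),
      ENNReal.ofReal_one]
  have h4 : (0:ℝ) ≤ Φ₀ (-x) := by rw [Φ₀_apply]; exact cdf_nonneg _ _
  have h5 : Φ₀ x ≤ 1 := by rw [Φ₀_apply]; exact cdf_le_one _ _
  rw [ENNReal.ofReal_eq_ofReal_iff h4 (by linarith)] at h3
  exact h3

/-- The construction showing that the critical constants α/2^(i-1) of the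
directional fixed sequence procedure cannot be improved under arbitrary dependence:
with Φ the standard normal cdf, q_i the (1 - α/2^i)-quantile, Z_k standard normal and
Φ(Z_i) = |2Φ(Z_{i+1}) − 1| a.s., the sum of the error probabilities equals α. -/
theorem unimprovable_critical_constants
    {Ω : Type*} [MeasurableSpace Ω] (Pr : Measure Ω) [IsProbabilityMeasure Pr]
    (Φ : ℝ → ℝ) (hΦ : Φ = fun x => cdf (gaussianReal 0 1) x)
    (α : ℝ) (hα : α ∈ Set.Ioo (0 : ℝ) 1)
    (k : ℕ) (hk : 1 ≤ k)
    (q : ℕ → ℝ) (hq : ∀ i, 1 ≤ i → i ≤ k → Φ (q i) = 1 - α / 2 ^ i)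
    (Z : ℕ → Ω → ℝ) (hZmeas : ∀ i, Measurable (Z i))
    (hZk : Pr.map (Z k) = gaussianReal 0 1)
    (hrec : ∀ᵐ ω ∂Pr, ∀ i, 1 ≤ i → i ≤ k - 1 → Φ (Z i ω) = |2 * Φ (Z (i + 1) ω) - 1|) :
    (∑ j ∈ Finset.Icc 1 (k - 1),
        (Pr {ω | (∀ l, 1 ≤ l → l ≤ j - 1 → q l ≤ Z l ω) ∧ Z j ω ≤ -q j}).toReal)
      + (Pr {ω | (∀ l, 1 ≤ l → l ≤ k - 1 → q l ≤ Z l ω) ∧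
            Z k ω ∉ Set.Ioo (-q k) (q k)}).toReal = α := by
  have hΦ' : Φ = Φ₀ := hΦ
  subst hΦ'
  obtain ⟨hα0, hα1⟩ := hα
  have mZΦ : ∀ i, Measurable (fun ω => Φ₀ (Z i ω)) :=
    fun i => Φ₀_mono.measurable.comp (hZmeas i)
  -- distribution of Φ₀ (Z i)
  have key : ∀ d i, 1 ≤ i → i + d = k → ∀ t : ℝ, 0 < t → t < 1 →
      Pr {ω | Φ₀ (Z i ω) ≤ t} = ENNReal.ofReal t ∧
      Pr {ω | Φ₀ (Z i ω) < t} = ENNReal.ofReal t := by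
    intro d
    induction d with
    | zero =>
      intro i _ hik t ht0 ht1
      have hik' : i = k := by omega
      subst hik'
      obtain ⟨s, hs⟩ := Φ₀_surj ht0 ht1
      have hset : {ω | Φ₀ (Z i ω) ≤ t} = Z i ⁻¹' (Iic s) := by
        ext ω; simp [← hs, Φ₀_strictMono.le_iff_le]
      have hset' : {ω | Φ₀ (Z i ω) < t} = Z i ⁻¹' (Iio s) := by
        ext ω; simp [← hs, Φ₀_strictMono.lt_iff_lt]
      constructor
      · rw [hset, ← Measure.map_apply (hZmeas i) measurableSet_Iic, hZk, gauss_Iic, hs]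
      · rw [hset', ← Measure.map_apply (hZmeas i) measurableSet_Iio, hZk, gauss_Iio, hs]
    | succ d ih =>
      intro i hi1 hik t ht0 ht1
      have hik' : (i + 1) + d = k := by omega
      obtain ⟨ihA, ihA'⟩ := ih (i+1) (by omega) hik' ((1+t)/2) (by linarith) (by linarith)
      obtain ⟨ihB, ihB'⟩ := ih (i+1) (by omega) hik' ((1-t)/2) (by linarith) (by linarith)
      have hrec_i : ∀ᵐ ω ∂Pr, Φ₀ (Z i ω) = |2 * Φ₀ (Z (i + 1) ω) - 1| := by
        filter_upwards [hrec] with ω hω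
        exact hω i hi1 (by omega)
      constructor
      · have hcong : Pr {ω | Φ₀ (Z i ω) ≤ t}
            = Pr ({ω | Φ₀ (Z (i+1) ω) ≤ (1+t)/2} \ {ω | Φ₀ (Z (i+1) ω) < (1-t)/2}) := by
          apply measure_congr
          rw [Filter.eventuallyEq_set]
          filter_upwards [hrec_i] with ω hω
          simp only [Set.mem_setOf_eq, Set.mem_diff, not_lt]
          rw [hω, abs_le]
          constructor
          · rintro ⟨h1, h2⟩; exact ⟨by linarith, by linarith⟩
          · rintro ⟨h1, h2⟩; exact ⟨by linarith, by linarith⟩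
        rw [hcong, measure_diff (fun ω hω => by
              simp only [Set.mem_setOf_eq] at hω ⊢; linarith)
            ((measurableSet_lt (mZΦ (i+1)) measurable_const).nullMeasurableSet)
            (measure_ne_top _ _), ihA, ihB',
          ← ENNReal.ofReal_sub _ (by linarith)]
        congr 1
        ring
      · have hcong : Pr {ω | Φ₀ (Z i ω) < t}
            = Pr ({ω | Φ₀ (Z (i+1) ω) < (1+t)/2} \ {ω | Φ₀ (Z (i+1) ω) ≤ (1-t)/2}) := by
          apply measure_congr
          rw [Filter.eventuallyEq_set]
          filter_upwards [hrec_i] with ω hω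
          simp only [Set.mem_setOf_eq, Set.mem_diff, not_le]
          rw [hω, abs_lt]
          constructor
          · rintro ⟨h1, h2⟩; exact ⟨by linarith, by linarith⟩
          · rintro ⟨h1, h2⟩; exact ⟨by linarith, by linarith⟩
        rw [hcong, measure_diff (fun ω hω => by
              simp only [Set.mem_setOf_eq] at hω ⊢; linarith)
            ((measurableSet_le (mZΦ (i+1)) measurable_const).nullMeasurableSet)
            (measure_ne_top _ _), ihA', ihB,
          ← ENNReal.ofReal_sub _ (by linarith)]
        congr 1
        ring
  -- propagation of thresholds
  have prop : ∀ ω, (∀ i, 1 ≤ i → i ≤ k - 1 → Φ₀ (Z i ω) = |2 * Φ₀ (Z (i + 1) ω) - 1|) →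
      ∀ j, 1 ≤ j → j ≤ k → (Φ₀ (Z j ω) ≤ α / 2 ^ j ∨ 1 - α / 2 ^ j ≤ Φ₀ (Z j ω)) →
      ∀ m l, 1 ≤ l → l + m + 1 = j → 1 - α / 2 ^ l ≤ Φ₀ (Z l ω) := by
    intro ω hω j hj1 hjk hdisj m
    induction m with
    | zero =>
      intro l hl hlj
      have hr : Φ₀ (Z l ω) = |2 * Φ₀ (Z (l + 1) ω) - 1| := hω l hl (by omega)
      have hlj' : l + 1 = j := by omega
      rw [← hlj'] at hdisj
      have e : 2 * (α / 2 ^ (l + 1)) = α / 2 ^ l := by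
        have h2 : (2:ℝ) ^ (l+1) = 2 ^ l * 2 := pow_succ 2 l
        have h2l : (0:ℝ) < 2 ^ l := pow_pos two_pos l
        field_simp [h2]
        ring
      rw [hr]
      rcases hdisj with h | h
      · exact le_abs.2 (Or.inr (by linarith))
      · exact le_abs.2 (Or.inl (by linarith))
    | succ m ihm =>
      intro l hl hlj
      have hnext : 1 - α / 2 ^ (l + 1) ≤ Φ₀ (Z (l + 1) ω) := ihm (l+1) (by omega) (by omega)
      have hr : Φ₀ (Z l ω) = |2 * Φ₀ (Z (l + 1) ω) - 1| := hω l hl (by omega)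
      have e : 2 * (α / 2 ^ (l + 1)) = α / 2 ^ l := by
        have h2 : (2:ℝ) ^ (l+1) = 2 ^ l * 2 := pow_succ 2 l
        have h2l : (0:ℝ) < 2 ^ l := pow_pos two_pos l
        field_simp [h2]
        ring
      rw [hr]
      exact le_abs.2 (Or.inl (by linarith))
  -- probability of each error event, j ≤ k-1
  have hAj : ∀ j, 1 ≤ j → j ≤ k - 1 →
      Pr {ω | (∀ l, 1 ≤ l → l ≤ j - 1 → q l ≤ Z l ω) ∧ Z j ω ≤ -q j}
        = ENNReal.ofReal (α / 2 ^ j) := by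
    intro j hj1 hjk1
    have hjk : j ≤ k := by omega
    have h2j : (1:ℝ) ≤ 2 ^ j := one_le_pow₀ one_le_two
    have hαj0 : 0 < α / 2 ^ j := by positivity
    have hαj1 : α / 2 ^ j < 1 := by
      rw [div_lt_one (by linarith)]; linarith
    have hqj : Φ₀ (-q j) = α / 2 ^ j := by
      rw [Φ₀_symm, hq j hj1 hjk]; ring
    have hcong : Pr {ω | (∀ l, 1 ≤ l → l ≤ j - 1 → q l ≤ Z l ω) ∧ Z j ω ≤ -q j}
        = Pr {ω | Φ₀ (Z j ω) ≤ α / 2 ^ j} := by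
      apply measure_congr
      rw [Filter.eventuallyEq_set]
      filter_upwards [hrec] with ω hω
      show _ ↔ _ ∈ {ω | Φ₀ (Z j ω) ≤ α / 2 ^ j}
      simp only [Set.mem_setOf_eq]
      constructor
      · rintro ⟨_, h⟩
        rw [← hqj]
        exact Φ₀_mono h
      · intro h
        refine ⟨fun l hl1 hl2 => ?_, ?_⟩
        · have hp := prop ω hω j hj1 hjk (Or.inl h) (j - l - 1) l hl1 (by omega)
          have hql : Φ₀ (q l) = 1 - α / 2 ^ l := hq l hl1 (by omega)
          exact Φ₀_strictMono.le_iff_le.1 (by rw [hql]; exact hp)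
        · exact Φ₀_strictMono.le_iff_le.1 (by rw [hqj]; exact h)
    rw [hcong]
    exact (key (k - j) j hj1 (by omega) _ hαj0 hαj1).1
  -- probability of the last event
  have h2k1 : (1:ℝ) ≤ 2 ^ (k - 1) := one_le_pow₀ one_le_two
  have h2k : (2:ℝ) ^ k = 2 ^ (k - 1) * 2 := by
    rw [← pow_succ]; congr 1; omega
  have hαk0 : 0 < α / 2 ^ k := by positivity
  have h2l : (0:ℝ) < 2 ^ (k-1) := pow_pos two_pos _
  have h2k2 : (2:ℝ) ≤ 2 ^ k := by rw [h2k]; nlinarith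
  have hhalf : α / 2 ^ k < 1/2 := by
    rw [div_lt_div_iff₀ (by positivity) (by norm_num)]
    nlinarith
  have hαk_half : α / 2 ^ k < 1 - α / 2 ^ k := by linarith
  have hαk1 : α / 2 ^ k < 1 := by linarith
  have hqkΦ : Φ₀ (q k) = 1 - α / 2 ^ k := hq k hk le_rfl
  have hqk : Φ₀ (-q k) = α / 2 ^ k := by rw [Φ₀_symm, hqkΦ]; ring
  have hC : Pr {ω | (∀ l, 1 ≤ l → l ≤ k - 1 → q l ≤ Z l ω) ∧ Z k ω ∉ Set.Ioo (-q k) (q k)}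
      = ENNReal.ofReal (α / 2 ^ (k - 1)) := by
    have hcong : Pr {ω | (∀ l, 1 ≤ l → l ≤ k - 1 → q l ≤ Z l ω) ∧ Z k ω ∉ Set.Ioo (-q k) (q k)}
        = Pr ({ω | Φ₀ (Z k ω) ≤ α / 2 ^ k} ∪ {ω | Φ₀ (Z k ω) < 1 - α / 2 ^ k}ᶜ) := by
      apply measure_congr
      rw [Filter.eventuallyEq_set]
      filter_upwards [hrec] with ω hω
      simp only [Set.mem_setOf_eq, Set.mem_union, Set.mem_compl_iff, Set.mem_Ioo, not_and,
        not_lt]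
      constructor
      · rintro ⟨_, hout⟩
        rcases le_or_gt (Z k ω) (-q k) with h | h
        · exact Or.inl (by rw [← hqk]; exact Φ₀_mono h)
        · have hqZ : q k ≤ Z k ω := hout h
          exact Or.inr (by rw [← hqkΦ]; exact Φ₀_mono hqZ)
      · intro hd
        have hd' : Φ₀ (Z k ω) ≤ α / 2 ^ k ∨ 1 - α / 2 ^ k ≤ Φ₀ (Z k ω) := hd
        refine ⟨fun l hl1 hl2 => ?_, ?_⟩
        · have hp := prop ω hω k hk le_rfl hd' (k - l - 1) l hl1 (by omega)
          have hql : Φ₀ (q l) = 1 - α / 2 ^ l := hq l hl1 (by omega)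
          exact Φ₀_strictMono.le_iff_le.1 (by rw [hql]; exact hp)
        · rcases hd' with h | h
          · intro hgt
            exact absurd (Φ₀_strictMono.le_iff_le.1 (by rw [hqk]; exact h))
              (not_le.2 hgt)
          · intro _
            exact Φ₀_strictMono.le_iff_le.1 (by rw [hqkΦ]; exact h)
    rw [hcong]
    have hdisj : Disjoint {ω | Φ₀ (Z k ω) ≤ α / 2 ^ k} {ω | Φ₀ (Z k ω) < 1 - α / 2 ^ k}ᶜ := by
      rw [Set.disjoint_left]
      intro ω h1 h2
      simp only [Set.mem_setOf_eq, Set.mem_compl_iff, not_lt] at h1 h2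
      linarith
    rw [measure_union hdisj
        ((measurableSet_lt (mZΦ k) measurable_const).compl)]
    have hT : Pr {ω | Φ₀ (Z k ω) < 1 - α / 2 ^ k} = ENNReal.ofReal (1 - α / 2 ^ k) :=
      (key 0 k hk (by omega) _ (by linarith) (by linarith)).2
    have hS : Pr {ω | Φ₀ (Z k ω) ≤ α / 2 ^ k} = ENNReal.ofReal (α / 2 ^ k) :=
      (key 0 k hk (by omega) _ hαk0 hαk1).1
    rw [prob_compl_eq_one_sub (measurableSet_lt (mZΦ k) measurable_const), hS, hT]
    rw [← ENNReal.ofReal_one, ← ENNReal.ofReal_sub _ (by linarith),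
      ← ENNReal.ofReal_add (by linarith) (by linarith)]
    congr 1
    rw [h2k]
    field_simp
    ring
  -- sum everything
  have hsum : ∀ m : ℕ, ∑ j ∈ Finset.Icc 1 m, α / 2 ^ j = α - α / 2 ^ m := by
    intro m
    induction m with
    | zero => simp
    | succ n ihn =>
      rw [Finset.sum_Icc_succ_top (by omega : 1 ≤ n + 1), ihn]
      have h2 : (2:ℝ) ^ (n+1) = 2 ^ n * 2 := pow_succ 2 n
      have h2l : (0:ℝ) < 2 ^ n := pow_pos two_pos n
      field_simp [h2]
      ring
  have hterm : ∀ j ∈ Finset.Icc 1 (k - 1),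
      (Pr {ω | (∀ l, 1 ≤ l → l ≤ j - 1 → q l ≤ Z l ω) ∧ Z j ω ≤ -q j}).toReal = α / 2 ^ j := by
    intro j hj
    rw [Finset.mem_Icc] at hj
    rw [hAj j hj.1 hj.2, ENNReal.toReal_ofReal (by positivity)]
  rw [Finset.sum_congr rfl hterm, hC, ENNReal.toReal_ofReal (by positivity), hsum]
  ring
end

section
/- Let n = 2 and θ_2 = 0, and apply Procedure 2 (both critical constants equal to α). Write F_{(θ_1,0)}(x,y) = Pr(T_1 ≤ x, T_2 ≤ y) for the joint cdf of (T_1, T_2). If θ_1 > 0 then mdFWER = α + F_{θ_1}(c_1) − F_{θ_1}(c_2) + F_{(θ_1,0)}(c_2, c_2) − F_{(θ_1,0)}(c_2, c_1), and if θ_1 < 0 then mdFWER = 1 + F_{θ_1}(c_1) − F_{θ_1}(c_2) + F_{(θ_1,0)}(c_1, c_1) − F_{(θ_1,0)}(c_1, c_2). -/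
open MeasureTheory ProbabilityTheory

/-- If a random variable has a continuous cdf, then every point has probability zero. -/
lemma cdf_continuous_atom_null {Ω : Type*} [MeasurableSpace Ω] (Pr : Measure Ω)
    [IsProbabilityMeasure Pr] (T : Ω → ℝ) (hT : Measurable T) (G : ℝ → ℝ) (hG : Continuous G)
    (hcdf : ∀ x : ℝ, (Pr {ω | T ω ≤ x}).toReal = G x) (x : ℝ) :
    Pr {ω | T ω = x} = 0 := by
  have key : ∀ y : ℝ, y < x → (Pr {ω | T ω = x}).toReal ≤ G x - G y := by
    intro y hy
    have hsub : {ω | T ω = x} ⊆ {ω | T ω ≤ x} \ {ω | T ω ≤ y} := by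
      intro ω hω
      simp only [Set.mem_setOf_eq] at hω
      refine ⟨hω.le, ?_⟩
      simp only [Set.mem_setOf_eq, hω]
      exact not_le.mpr hy
    have hmono : Pr {ω | T ω ≤ y} ≤ Pr {ω | T ω ≤ x} :=
      measure_mono (fun ω hω => le_trans hω hy.le)
    have h2 : Pr ({ω | T ω ≤ x} \ {ω | T ω ≤ y}) = Pr {ω | T ω ≤ x} - Pr {ω | T ω ≤ y} :=
      measure_diff (fun ω hω => le_trans hω hy.le)
        (hT measurableSet_Iic).nullMeasurableSet (measure_ne_top Pr _)
    calc (Pr {ω | T ω = x}).toReal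
        ≤ (Pr ({ω | T ω ≤ x} \ {ω | T ω ≤ y})).toReal :=
          ENNReal.toReal_mono (measure_ne_top Pr _) (measure_mono hsub)
      _ = G x - G y := by
          rw [h2, ENNReal.toReal_sub_of_le hmono (measure_ne_top Pr _), hcdf, hcdf]
  have hlim : Filter.Tendsto (fun y => G x - G y) (nhdsWithin x (Set.Iio x)) (nhds (G x - G x)) :=
    Filter.Tendsto.sub tendsto_const_nhds ((hG.tendsto x).mono_left nhdsWithin_le_nhds)
  have hle : (Pr {ω | T ω = x}).toReal ≤ G x - G x :=
    ge_of_tendsto hlim (Filter.eventually_of_mem self_mem_nhdsWithin (fun y hy => key y hy))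
  have h0 : (Pr {ω | T ω = x}).toReal = 0 :=
    le_antisymm (by linarith) ENNReal.toReal_nonneg
  rcases (ENNReal.toReal_eq_zero_iff _).mp h0 with h | h
  · exact h
  · exact absurd h (measure_ne_top Pr _)

/-- Exact expression for the mdFWER of Procedure 2 (n = 2, θ₂ = 0),
in terms of the marginal cdf of T₁ and the joint cdf of (T₁, T₂). -/
theorem mdFWER_two_hypotheses_expression
    {Ω : Type*} [MeasurableSpace Ω] (Pr : Measure Ω) [IsProbabilityMeasure Pr]
    (F : ℝ → ℝ → ℝ)
    (hFcont : ∀ θ, Continuous (F θ))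
    (hFmono : ∀ θ, Monotone (F θ))
    (hF0strict : StrictMono (F 0))
    (hFsym : ∀ x : ℝ, F 0 (-x) = 1 - F 0 x)
    (hstoch : ∀ θ θ' : ℝ, θ ≤ θ' → ∀ x, F θ' x ≤ F θ x)
    (θ₁ : ℝ) (T₁ T₂ : Ω → ℝ) (hT₁ : Measurable T₁) (hT₂ : Measurable T₂)
    (hcdf₁ : ∀ x : ℝ, (Pr {ω | T₁ ω ≤ x}).toReal = F θ₁ x)
    (hcdf₂ : ∀ x : ℝ, (Pr {ω | T₂ ω ≤ x}).toReal = F 0 x)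
    (α : ℝ) (hα : α ∈ Set.Ioo (0 : ℝ) 1)
    (c₁ c₂ : ℝ) (hc₁ : F 0 c₁ = α / 2) (hc₂ : F 0 c₂ = 1 - α / 2)
    -- joint cdf of (T₁, T₂)
    (J : ℝ → ℝ → ℝ) (hJ : ∀ x y : ℝ, J x y = (Pr {ω | T₁ ω ≤ x ∧ T₂ ω ≤ y}).toReal)
    -- mdFWER of the directional fixed sequence procedure with both critical constants α
    (mdFWER : ℝ)
    (hmd : mdFWER = (Pr {ω | ∃ i : Fin 2,
        (∀ j : Fin 2, j ≤ i →
          2 * min (F 0 ((![T₁, T₂] j) ω)) (1 - F 0 ((![T₁, T₂] j) ω)) ≤ α) ∧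
        ((![θ₁, 0] i : ℝ) = 0 ∨
          ((![θ₁, 0] i : ℝ) ≠ 0 ∧ (![θ₁, 0] i : ℝ) * (![T₁, T₂] i) ω < 0))}).toReal) :
    (0 < θ₁ → mdFWER = α + F θ₁ c₁ - F θ₁ c₂ + J c₂ c₂ - J c₂ c₁) ∧
    (θ₁ < 0 → mdFWER = 1 + F θ₁ c₁ - F θ₁ c₂ + J c₁ c₁ - J c₁ c₂) := by
  obtain ⟨hα0, hα1⟩ := hα
  -- basic facts about F 0 and c₁, c₂
  have hF00 : F 0 0 = 1/2 := by have := hFsym 0; rw [neg_zero] at this; linarith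
  have hc₁0 : c₁ < 0 := by
    have : F 0 c₁ < F 0 0 := by rw [hF00, hc₁]; linarith
    exact hF0strict.lt_iff_lt.mp this
  have hc₂0 : 0 < c₂ := by
    have : F 0 0 < F 0 c₂ := by rw [hF00, hc₂]; linarith
    exact hF0strict.lt_iff_lt.mp this
  have hc₁c₂ : c₁ < c₂ := lt_trans hc₁0 hc₂0
  -- the p-value condition is equivalent to a condition on T
  have hA : ∀ (t : ℝ), (2 * min (F 0 t) (1 - F 0 t) ≤ α) ↔ (t ≤ c₁ ∨ c₂ ≤ t) := by
    intro t
    have h1 : (F 0 t ≤ α/2) ↔ t ≤ c₁ := by rw [← hc₁]; exact hF0strict.le_iff_le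
    have h2 : (1 - F 0 t ≤ α/2) ↔ c₂ ≤ t := by
      constructor
      · intro h; exact hF0strict.le_iff_le.mp (by rw [hc₂]; linarith)
      · intro h; have := hF0strict.le_iff_le.mpr h; rw [hc₂] at this; linarith
    rw [← h1, ← h2]
    rcases min_le_iff.mp (le_refl (min (F 0 t) (1 - F 0 t))) with _ | _ <;>
    · constructor
      · intro h
        rcases min_le_iff.mp (le_of_mul_le_mul_left (by linarith [h] : 2 * min (F 0 t) (1 - F 0 t) ≤ 2 * (α/2)) two_pos) with h' | h'
        · exact Or.inl h'
        · exact Or.inr h'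
      · intro h
        rcases h with h | h
        · calc 2 * min (F 0 t) (1 - F 0 t) ≤ 2 * F 0 t := by
                have := min_le_left (F 0 t) (1 - F 0 t); linarith
            _ ≤ α := by linarith
        · calc 2 * min (F 0 t) (1 - F 0 t) ≤ 2 * (1 - F 0 t) := by
                have := min_le_right (F 0 t) (1 - F 0 t); linarith
            _ ≤ α := by linarith
  -- null atoms
  have hatom₁ : ∀ x : ℝ, Pr {ω | T₁ ω = x} = 0 :=
    cdf_continuous_atom_null Pr T₁ hT₁ (F θ₁) (hFcont θ₁) hcdf₁
  have hatom₂ : ∀ x : ℝ, Pr {ω | T₂ ω = x} = 0 :=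
    cdf_continuous_atom_null Pr T₂ hT₂ (F 0) (hFcont 0) hcdf₂
  have hae₁ : ∀ x : ℝ, ∀ᵐ ω ∂Pr, T₁ ω ≠ x := by
    intro x; rw [MeasureTheory.ae_iff]; simpa using hatom₁ x
  have hae₂ : ∀ x : ℝ, ∀ᵐ ω ∂Pr, T₂ ω ≠ x := by
    intro x; rw [MeasureTheory.ae_iff]; simpa using hatom₂ x
  -- measurability
  have m1 : ∀ x : ℝ, MeasurableSet {ω | T₁ ω ≤ x} := fun x => hT₁ measurableSet_Iic
  have m2 : ∀ x : ℝ, MeasurableSet {ω | T₂ ω ≤ x} := fun x => hT₂ measurableSet_Iic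
  -- helper: toReal additivity for disjoint sets
  have padd : ∀ s t : Set Ω, MeasurableSet t → Disjoint s t →
      (Pr (s ∪ t)).toReal = (Pr s).toReal + (Pr t).toReal := by
    intro s t ht hd
    rw [measure_union hd ht, ENNReal.toReal_add (measure_ne_top Pr _) (measure_ne_top Pr _)]
  -- helper: P(s \ t) = P(s) - P(s ∩ t) for measurable t
  have pdiff : ∀ s t : Set Ω, MeasurableSet t →
      (Pr (s \ t)).toReal = (Pr s).toReal - (Pr (s ∩ t)).toReal := by
    intro s t ht
    have := measure_inter_add_diff (μ := Pr) s ht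
    have h' : (Pr (s ∩ t)).toReal + (Pr (s \ t)).toReal = (Pr s).toReal := by
      rw [← ENNReal.toReal_add (measure_ne_top Pr _) (measure_ne_top Pr _), this]
    linarith
  -- key probability: P(c₂ ≤ T₁ ∧ T₂ ≤ y) = F 0 y - J c₂ y
  have key₁ : ∀ y : ℝ, (Pr {ω | c₂ ≤ T₁ ω ∧ T₂ ω ≤ y}).toReal = F 0 y - J c₂ y := by
    intro y
    have hcongr : Pr {ω | c₂ ≤ T₁ ω ∧ T₂ ω ≤ y}
        = Pr ({ω | T₂ ω ≤ y} \ {ω | T₁ ω ≤ c₂}) := by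
      apply measure_congr
      rw [Filter.eventuallyEq_set]
      filter_upwards [hae₁ c₂] with ω hω
      simp only [Set.mem_setOf_eq, Set.mem_diff, Set.mem_setOf_eq]
      constructor
      · rintro ⟨h1, h2⟩; exact ⟨h2, fun h => hω (le_antisymm h h1)⟩
      · rintro ⟨h1, h2⟩; exact ⟨le_of_not_ge h2, h1⟩
    have hseteq : {ω | T₂ ω ≤ y} ∩ {ω | T₁ ω ≤ c₂} = {ω | T₁ ω ≤ c₂ ∧ T₂ ω ≤ y} := by
      ext ω
      simp only [Set.mem_inter_iff, Set.mem_setOf_eq]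
      tauto
    rw [hcongr, pdiff _ _ (m1 c₂), hcdf₂, hseteq, hJ]
  -- key probability: P(T₁ ≤ x ∧ c₂ ≤ T₂) = F θ₁ x - J x c₂
  have key₂ : ∀ x : ℝ, (Pr {ω | T₁ ω ≤ x ∧ c₂ ≤ T₂ ω}).toReal = F θ₁ x - J x c₂ := by
    intro x
    have hcongr : Pr {ω | T₁ ω ≤ x ∧ c₂ ≤ T₂ ω}
        = Pr ({ω | T₁ ω ≤ x} \ {ω | T₂ ω ≤ c₂}) := by
      apply measure_congr
      rw [Filter.eventuallyEq_set]
      filter_upwards [hae₂ c₂] with ω hω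
      simp only [Set.mem_setOf_eq, Set.mem_diff, Set.mem_setOf_eq]
      constructor
      · rintro ⟨h1, h2⟩; exact ⟨h1, fun h => hω (le_antisymm h h2)⟩
      · rintro ⟨h1, h2⟩; exact ⟨h1, le_of_not_ge h2⟩
    have hseteq : {ω | T₁ ω ≤ x} ∩ {ω | T₂ ω ≤ c₂} = {ω | T₁ ω ≤ x ∧ T₂ ω ≤ c₂} := by
      ext ω
      simp only [Set.mem_inter_iff, Set.mem_setOf_eq]
    rw [hcongr, pdiff _ _ (m2 c₂), hcdf₁, hseteq, hJ]
  -- P(c₂ ≤ T₁) = 1 - F θ₁ c₂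
  have key₃ : (Pr {ω | c₂ ≤ T₁ ω}).toReal = 1 - F θ₁ c₂ := by
    have hcongr : Pr {ω | c₂ ≤ T₁ ω} = Pr ({ω | T₁ ω ≤ c₂}ᶜ) := by
      apply measure_congr
      rw [Filter.eventuallyEq_set]
      filter_upwards [hae₁ c₂] with ω hω
      simp only [Set.mem_setOf_eq, Set.mem_compl_iff, Set.mem_setOf_eq, not_le]
      constructor
      · intro h; exact lt_of_le_of_ne h (fun h' => hω h'.symm)
      · exact le_of_lt
    rw [hcongr, measure_compl (m1 c₂) (measure_ne_top Pr _), measure_univ,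
      ENNReal.toReal_sub_of_le prob_le_one ENNReal.one_ne_top, ENNReal.toReal_one, hcdf₁]
  -- the event set, simplified
  rw [hmd]
  have hset : {ω | ∃ i : Fin 2,
        (∀ j : Fin 2, j ≤ i →
          2 * min (F 0 ((![T₁, T₂] j) ω)) (1 - F 0 ((![T₁, T₂] j) ω)) ≤ α) ∧
        ((![θ₁, 0] i : ℝ) = 0 ∨
          ((![θ₁, 0] i : ℝ) ≠ 0 ∧ (![θ₁, 0] i : ℝ) * (![T₁, T₂] i) ω < 0))}
      = {ω | ((T₁ ω ≤ c₁ ∨ c₂ ≤ T₁ ω) ∧ (θ₁ = 0 ∨ θ₁ ≠ 0 ∧ θ₁ * T₁ ω < 0)) ∨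
          ((T₁ ω ≤ c₁ ∨ c₂ ≤ T₁ ω) ∧ (T₂ ω ≤ c₁ ∨ c₂ ≤ T₂ ω))} := by
    ext ω
    simp only [Set.mem_setOf_eq, Fin.exists_fin_two, Fin.forall_fin_two, Matrix.cons_val_zero,
      Matrix.cons_val_one, Matrix.head_cons, Fin.le_zero_iff, Fin.zero_le, le_refl,
      forall_true_left, true_implies, show ((1:Fin 2) = 0) ↔ False by simp, false_implies,
      and_true, eq_self_iff_true, true_or, or_true, hA]
  rw [hset]
  constructor
  · -- case θ₁ > 0
    intro hθ
    have hθne : θ₁ ≠ 0 := ne_of_gt hθ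
    have hmul : ∀ ω, θ₁ * T₁ ω < 0 ↔ T₁ ω < 0 := by
      intro ω
      constructor
      · intro h; nlinarith
      · intro h; nlinarith
    have hEq : {ω | ((T₁ ω ≤ c₁ ∨ c₂ ≤ T₁ ω) ∧ (θ₁ = 0 ∨ θ₁ ≠ 0 ∧ θ₁ * T₁ ω < 0)) ∨
          ((T₁ ω ≤ c₁ ∨ c₂ ≤ T₁ ω) ∧ (T₂ ω ≤ c₁ ∨ c₂ ≤ T₂ ω))}
        = {ω | T₁ ω ≤ c₁} ∪ ({ω | c₂ ≤ T₁ ω ∧ T₂ ω ≤ c₁} ∪ {ω | c₂ ≤ T₁ ω ∧ c₂ ≤ T₂ ω}) := by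
      ext ω
      simp only [Set.mem_setOf_eq, Set.mem_union, Set.mem_setOf_eq, hmul]
      constructor
      · rintro (⟨h1, h2⟩ | ⟨h1, h2⟩)
        · rcases h1 with h1 | h1
          · exact Or.inl h1
          · rcases h2 with h2 | ⟨_, h2⟩
            · exact absurd h2 hθne
            · linarith
        · rcases h1 with h1 | h1
          · exact Or.inl h1
          · rcases h2 with h2 | h2
            · exact Or.inr (Or.inl ⟨h1, h2⟩)
            · exact Or.inr (Or.inr ⟨h1, h2⟩)
      · rintro (h | ⟨h1, h2⟩ | ⟨h1, h2⟩)
        · exact Or.inl ⟨Or.inl h, Or.inr ⟨hθne, by linarith⟩⟩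
        · exact Or.inr ⟨Or.inr h1, Or.inl h2⟩
        · exact Or.inr ⟨Or.inr h1, Or.inr h2⟩
    rw [hEq]
    -- measurability of the pieces
    have mA : MeasurableSet {ω | c₂ ≤ T₁ ω ∧ T₂ ω ≤ c₁} := by
      have : {ω | c₂ ≤ T₁ ω ∧ T₂ ω ≤ c₁} = T₁ ⁻¹' (Set.Ici c₂) ∩ T₂ ⁻¹' (Set.Iic c₁) := rfl
      rw [this]; exact (hT₁ measurableSet_Ici).inter (hT₂ measurableSet_Iic)
    have mB : MeasurableSet {ω | c₂ ≤ T₁ ω ∧ c₂ ≤ T₂ ω} := by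
      have : {ω | c₂ ≤ T₁ ω ∧ c₂ ≤ T₂ ω} = T₁ ⁻¹' (Set.Ici c₂) ∩ T₂ ⁻¹' (Set.Ici c₂) := rfl
      rw [this]; exact (hT₁ measurableSet_Ici).inter (hT₂ measurableSet_Ici)
    have hd1 : Disjoint {ω | T₁ ω ≤ c₁}
        ({ω | c₂ ≤ T₁ ω ∧ T₂ ω ≤ c₁} ∪ {ω | c₂ ≤ T₁ ω ∧ c₂ ≤ T₂ ω}) := by
      rw [Set.disjoint_left]
      rintro ω h1 (⟨h2, _⟩ | ⟨h2, _⟩) <;> simp only [Set.mem_setOf_eq] at h1 <;> linarith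
    have hd2 : Disjoint {ω | c₂ ≤ T₁ ω ∧ T₂ ω ≤ c₁} {ω | c₂ ≤ T₁ ω ∧ c₂ ≤ T₂ ω} := by
      rw [Set.disjoint_left]
      rintro ω ⟨_, h1⟩ ⟨_, h2⟩; linarith
    rw [padd _ _ (mA.union mB) hd1, padd _ _ mB hd2, hcdf₁, key₁ c₁]
    -- compute P(c₂ ≤ T₁ ∧ c₂ ≤ T₂)
    have hcompl : (Pr {ω | c₂ ≤ T₁ ω ∧ c₂ ≤ T₂ ω}).toReal
        = 1 - F θ₁ c₂ - (F 0 c₂ - J c₂ c₂) := by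
      have hcongr : Pr {ω | c₂ ≤ T₁ ω} =
          Pr ({ω | c₂ ≤ T₁ ω ∧ T₂ ω < c₂} ∪ {ω | c₂ ≤ T₁ ω ∧ c₂ ≤ T₂ ω}) := by
        apply measure_congr
        rw [Filter.eventuallyEq_set]
        filter_upwards [] with ω
        simp only [Set.mem_setOf_eq, Set.mem_union, Set.mem_setOf_eq]
        constructor
        · intro h
          rcases lt_or_ge (T₂ ω) c₂ with h' | h'
          · exact Or.inl ⟨h, h'⟩
          · exact Or.inr ⟨h, h'⟩
        · rintro (⟨h, _⟩ | ⟨h, _⟩) <;> exact h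
      have hd' : Disjoint {ω | c₂ ≤ T₁ ω ∧ T₂ ω < c₂} {ω | c₂ ≤ T₁ ω ∧ c₂ ≤ T₂ ω} := by
        rw [Set.disjoint_left]
        rintro ω ⟨_, h1⟩ ⟨_, h2⟩; linarith
      have heq2 : (Pr {ω | c₂ ≤ T₁ ω ∧ T₂ ω < c₂}).toReal
          = (Pr {ω | c₂ ≤ T₁ ω ∧ T₂ ω ≤ c₂}).toReal := by
        congr 1
        apply measure_congr
        rw [Filter.eventuallyEq_set]
        filter_upwards [hae₂ c₂] with ω hω
        constructor
        · rintro ⟨h1, h2⟩; exact ⟨h1, h2.le⟩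
        · rintro ⟨h1, h2⟩; exact ⟨h1, lt_of_le_of_ne h2 hω⟩
      have := padd {ω | c₂ ≤ T₁ ω ∧ T₂ ω < c₂} {ω | c₂ ≤ T₁ ω ∧ c₂ ≤ T₂ ω} mB hd'
      rw [← hcongr] at this
      rw [key₃, heq2, key₁ c₂] at this
      linarith
    rw [hcompl, hc₁, hc₂]
    ring
  · -- case θ₁ < 0
    intro hθ
    have hθne : θ₁ ≠ 0 := ne_of_lt hθ
    have hmul : ∀ ω, θ₁ * T₁ ω < 0 ↔ 0 < T₁ ω := by
      intro ω
      constructor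
      · intro h; nlinarith
      · intro h; nlinarith
    have hEq : {ω | ((T₁ ω ≤ c₁ ∨ c₂ ≤ T₁ ω) ∧ (θ₁ = 0 ∨ θ₁ ≠ 0 ∧ θ₁ * T₁ ω < 0)) ∨
          ((T₁ ω ≤ c₁ ∨ c₂ ≤ T₁ ω) ∧ (T₂ ω ≤ c₁ ∨ c₂ ≤ T₂ ω))}
        = {ω | c₂ ≤ T₁ ω} ∪ ({ω | T₁ ω ≤ c₁ ∧ T₂ ω ≤ c₁} ∪ {ω | T₁ ω ≤ c₁ ∧ c₂ ≤ T₂ ω}) := by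
      ext ω
      simp only [Set.mem_setOf_eq, Set.mem_union, Set.mem_setOf_eq, hmul]
      constructor
      · rintro (⟨h1, h2⟩ | ⟨h1, h2⟩)
        · rcases h1 with h1 | h1
          · rcases h2 with h2 | ⟨_, h2⟩
            · exact absurd h2 hθne
            · linarith
          · exact Or.inl h1
        · rcases h1 with h1 | h1
          · rcases h2 with h2 | h2
            · exact Or.inr (Or.inl ⟨h1, h2⟩)
            · exact Or.inr (Or.inr ⟨h1, h2⟩)
          · exact Or.inl h1
      · rintro (h | ⟨h1, h2⟩ | ⟨h1, h2⟩)
        · exact Or.inl ⟨Or.inr h, Or.inr ⟨hθne, by linarith⟩⟩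
        · exact Or.inr ⟨Or.inl h1, Or.inl h2⟩
        · exact Or.inr ⟨Or.inl h1, Or.inr h2⟩
    rw [hEq]
    have mA : MeasurableSet {ω | T₁ ω ≤ c₁ ∧ T₂ ω ≤ c₁} := by
      have : {ω | T₁ ω ≤ c₁ ∧ T₂ ω ≤ c₁} = T₁ ⁻¹' (Set.Iic c₁) ∩ T₂ ⁻¹' (Set.Iic c₁) := rfl
      rw [this]; exact (hT₁ measurableSet_Iic).inter (hT₂ measurableSet_Iic)
    have mB : MeasurableSet {ω | T₁ ω ≤ c₁ ∧ c₂ ≤ T₂ ω} := by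
      have : {ω | T₁ ω ≤ c₁ ∧ c₂ ≤ T₂ ω} = T₁ ⁻¹' (Set.Iic c₁) ∩ T₂ ⁻¹' (Set.Ici c₂) := rfl
      rw [this]; exact (hT₁ measurableSet_Iic).inter (hT₂ measurableSet_Ici)
    have hd1 : Disjoint {ω | c₂ ≤ T₁ ω}
        ({ω | T₁ ω ≤ c₁ ∧ T₂ ω ≤ c₁} ∪ {ω | T₁ ω ≤ c₁ ∧ c₂ ≤ T₂ ω}) := by
      rw [Set.disjoint_left]
      rintro ω h1 (⟨h2, _⟩ | ⟨h2, _⟩) <;> simp only [Set.mem_setOf_eq] at h1 <;> linarith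
    have hd2 : Disjoint {ω | T₁ ω ≤ c₁ ∧ T₂ ω ≤ c₁} {ω | T₁ ω ≤ c₁ ∧ c₂ ≤ T₂ ω} := by
      rw [Set.disjoint_left]
      rintro ω ⟨_, h1⟩ ⟨_, h2⟩; linarith
    rw [padd _ _ (mA.union mB) hd1, padd _ _ mB hd2, key₃, key₂ c₁]
    have hJc₁c₁ : (Pr {ω | T₁ ω ≤ c₁ ∧ T₂ ω ≤ c₁}).toReal = J c₁ c₁ := (hJ c₁ c₁).symm
    rw [hJc₁c₁]
    ring
end

section
/- Let n = 2 and θ_2 = 0, apply Procedure 2 (both critical constants equal to α), and suppose T_1 and T_2 are independent. Then mdFWER = α + F_{θ_1}(c_1) − α·F_{θ_1}(c_2) when θ_1 > 0, and mdFWER = 1 + α·F_{θ_1}(c_1) − F_{θ_1}(c_2) when θ_1 < 0. -/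
open MeasureTheory ProbabilityTheory Set

/-! Since `c₁ < 0 < c₂`, when `θ₁ > 0` a directional error on `H₁` happens exactly when
`T₁ ≤ c₁`; otherwise the only possible error is rejecting the true `H₂` after `H₁` was rejected
with `T₁ ≥ c₂`, which by independence has probability `(1 - F θ₁ c₂) · α`. The case `θ₁ < 0` is
the mirror image. Continuity of the cdfs gives `Pr (T ≥ c) = 1 - F c`. -/

section ContinuousCDF

variable {Ω : Type*} [MeasurableSpace Ω] {Pr : Measure Ω} [IsProbabilityMeasure Pr]
  {T : Ω → ℝ} {G : ℝ → ℝ}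

lemma cdf_map_eq_s6 (hT : Measurable T) (hcdf : ∀ x, Pr.real {ω | T ω ≤ x} = G x) :
    ⇑(cdf (Pr.map T)) = G := by
  have := Measure.isProbabilityMeasure_map (μ := Pr) hT.aemeasurable
  funext x
  rw [cdf_eq_real, map_measureReal_apply hT measurableSet_Iic]
  exact hcdf x

lemma measure_map_singleton_eq_zero (hT : Measurable T) (hG : Continuous G)
    (hcdf : ∀ x, Pr.real {ω | T ω ≤ x} = G x) (x : ℝ) : Pr.map T {x} = 0 := by
  have := Measure.isProbabilityMeasure_map (μ := Pr) hT.aemeasurable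
  rw [← measure_cdf (Pr.map T), StieltjesFunction.measure_singleton, cdf_map_eq_s6 hT hcdf,
    hG.continuousWithinAt.leftLim_eq, sub_self, ENNReal.ofReal_zero]

lemma measureReal_preimage_Ici (hT : Measurable T) (hG : Continuous G)
    (hcdf : ∀ x, Pr.real {ω | T ω ≤ x} = G x) (c : ℝ) :
    Pr.real (T ⁻¹' Ici c) = 1 - G c := by
  have := Measure.isProbabilityMeasure_map (μ := Pr) hT.aemeasurable
  rw [← map_measureReal_apply hT measurableSet_Ici,
    measureReal_congr (Ioi_ae_eq_Ici' (measure_map_singleton_eq_zero hT hG hcdf c)).symm,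
    ← compl_Iic, measureReal_compl measurableSet_Iic, probReal_univ,
    map_measureReal_apply hT measurableSet_Iic]
  exact congrArg (1 - ·) (hcdf c)

lemma measureReal_preimage_Iic_union_Ici (hT : Measurable T) (hG : Continuous G)
    (hcdf : ∀ x, Pr.real {ω | T ω ≤ x} = G x) {c₁ c₂ : ℝ} (hc : c₁ < c₂) :
    Pr.real (T ⁻¹' (Iic c₁ ∪ Ici c₂)) = G c₁ + (1 - G c₂) := by
  rw [preimage_union, measureReal_union ((Iic_disjoint_Ici.mpr hc.not_ge).preimage T)
    (hT measurableSet_Ici), measureReal_preimage_Ici hT hG hcdf]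
  exact congrArg (· + _) (hcdf c₁)

end ContinuousCDF

lemma two_mul_min_le_iff {G : ℝ → ℝ} (hG : StrictMono G) {α c₁ c₂ : ℝ} (hc₁ : G c₁ = α / 2)
    (hc₂ : G c₂ = 1 - α / 2) (t : ℝ) :
    2 * min (G t) (1 - G t) ≤ α ↔ t ∈ Iic c₁ ∪ Ici c₂ := by
  rw [mem_union, mem_Iic, mem_Ici, ← hG.le_iff_le (a := t), ← hG.le_iff_le (b := t), hc₁, hc₂,
    ← le_div_iff₀' two_pos, min_le_iff]
  exact or_congr Iff.rfl (by constructor <;> intro h <;> linarith)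

lemma setOf_fixedSequence_error_eq {Ω : Type*} (X : Fin 2 → Ω → ℝ) (θ : Fin 2 → ℝ) (R : Set ℝ)
    (hθ₀ : θ 0 ≠ 0) (hθ₁ : θ 1 = 0) :
    {ω | ∃ i : Fin 2, (∀ j, j ≤ i → X j ω ∈ R) ∧ (θ i = 0 ∨ θ i ≠ 0 ∧ θ i * X i ω < 0)} =
      X 0 ⁻¹' (R ∩ {t | θ 0 * t < 0}) ∪ (X 0 ⁻¹' (R \ {t | θ 0 * t < 0}) ∩ X 1 ⁻¹' R) := by
  ext ω
  simp only [mem_ofPred_eq, mem_union, mem_inter_iff, mem_preimage, mem_sdiff, Fin.exists_fin_two,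
    Fin.forall_fin_two]
  grind

lemma ProbabilityTheory.IndepFun.measureReal_preimage_union_inter {Ω β γ : Type*}
    [MeasurableSpace Ω] [MeasurableSpace β] [MeasurableSpace γ] {μ : Measure Ω} [IsFiniteMeasure μ]
    {X : Ω → β} {Y : Ω → γ} (hX : Measurable X) (hY : Measurable Y) (hXY : IndepFun X Y μ)
    {s t : Set β} {u : Set γ} (ht : MeasurableSet t) (hu : MeasurableSet u) (hst : Disjoint s t) :
    μ.real (X ⁻¹' s ∪ (X ⁻¹' t ∩ Y ⁻¹' u)) =
      μ.real (X ⁻¹' s) + μ.real (X ⁻¹' t) * μ.real (Y ⁻¹' u) := by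
  rw [measureReal_union (hst.preimage X |>.mono_right inter_subset_left)
      ((ht.preimage hX).inter (hu.preimage hY))]
  simp only [measureReal_def, hXY.measure_inter_preimage_eq_mul t u ht hu, ENNReal.toReal_mul]

theorem mdFWER_two_hypotheses_expression_indep_general
    {Ω : Type*} [MeasurableSpace Ω] (Pr : Measure Ω) [IsProbabilityMeasure Pr]
    (F : ℝ → ℝ → ℝ)
    (hFcont : ∀ θ, Continuous (F θ))
    (hF0strict : StrictMono (F 0))
    (hFsym : ∀ x : ℝ, F 0 (-x) = 1 - F 0 x)
    (θ₁ : ℝ) (T₁ T₂ : Ω → ℝ) (hT₁ : Measurable T₁) (hT₂ : Measurable T₂)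
    (hcdf₁ : ∀ x : ℝ, (Pr {ω | T₁ ω ≤ x}).toReal = F θ₁ x)
    (hcdf₂ : ∀ x : ℝ, (Pr {ω | T₂ ω ≤ x}).toReal = F 0 x)
    (hindep : IndepFun T₁ T₂ Pr)
    (α : ℝ) (hα : α ∈ Set.Ioo (0 : ℝ) 1)
    (c₁ c₂ : ℝ) (hc₁ : F 0 c₁ = α / 2) (hc₂ : F 0 c₂ = 1 - α / 2)
    -- mdFWER of the directional fixed sequence procedure with both critical constants α
    (mdFWER : ℝ)
    (hmd : mdFWER = (Pr {ω | ∃ i : Fin 2,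
        (∀ j : Fin 2, j ≤ i →
          2 * min (F 0 ((![T₁, T₂] j) ω)) (1 - F 0 ((![T₁, T₂] j) ω)) ≤ α) ∧
        ((![θ₁, 0] i : ℝ) = 0 ∨
          ((![θ₁, 0] i : ℝ) ≠ 0 ∧ (![θ₁, 0] i : ℝ) * (![T₁, T₂] i) ω < 0))}).toReal) :
    (0 < θ₁ → mdFWER = α + F θ₁ c₁ - α * F θ₁ c₂) ∧
    (θ₁ < 0 → mdFWER = 1 + α * F θ₁ c₁ - F θ₁ c₂) := by
  have hhalf : F 0 0 = 1 / 2 := by linarith [show F 0 0 = 1 - F 0 0 by simpa using hFsym 0]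
  have hc₁0 : c₁ < 0 := hF0strict.lt_iff_lt.mp (by linarith [hα.2])
  have hc₂0 : 0 < c₂ := hF0strict.lt_iff_lt.mp (by linarith [hα.2])
  set R := Iic c₁ ∪ Ici c₂
  have hR : Pr.real (T₂ ⁻¹' R) = α := by
    rw [measureReal_preimage_Iic_union_Ici hT₂ (hFcont 0) hcdf₂ (hc₁0.trans hc₂0), hc₁, hc₂]
    ring
  have hsplit (hθ : θ₁ ≠ 0) : mdFWER = Pr.real (T₁ ⁻¹' (R ∩ {t | θ₁ * t < 0})) +
      Pr.real (T₁ ⁻¹' (R \ {t | θ₁ * t < 0})) * α := by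
    simp only [two_mul_min_le_iff hF0strict hc₁ hc₂] at hmd
    have hRm : MeasurableSet R := measurableSet_Iic.union measurableSet_Ici
    have hEm : MeasurableSet {t : ℝ | θ₁ * t < 0} := measurableSet_lt (by fun_prop) (by fun_prop)
    rw [hmd, ← measureReal_def, setOf_fixedSequence_error_eq ![T₁, T₂] ![θ₁, 0] R hθ rfl]
    simp only [Matrix.cons_val_zero, Matrix.cons_val_one]
    rw [hindep.measureReal_preimage_union_inter hT₁ hT₂ (hRm.diff hEm) hRm
      (disjoint_sdiff_right.mono_left inter_subset_right), hR]
  have hcdf₁' : ∀ x, Pr.real (T₁ ⁻¹' Iic x) = F θ₁ x := hcdf₁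
  constructor
  · intro hθ
    have hE : {t : ℝ | θ₁ * t < 0} = Iio 0 := by ext t; simp [mul_neg_iff, hθ, hθ.not_gt]
    have hRE : R ∩ Iio 0 = Iic c₁ ∧ R \ Iio 0 = Ici c₂ := by constructor <;> ext t <;> grind
    rw [hsplit hθ.ne', hE, hRE.1, hRE.2, hcdf₁', measureReal_preimage_Ici hT₁ (hFcont θ₁) hcdf₁]
    ring
  · intro hθ
    have hE : {t : ℝ | θ₁ * t < 0} = Ioi 0 := by ext t; simp [mul_neg_iff, hθ, hθ.not_gt]
    have hRE : R ∩ Ioi 0 = Ici c₂ ∧ R \ Ioi 0 = Iic c₁ := by constructor <;> ext t <;> grind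
    rw [hsplit hθ.ne, hE, hRE.1, hRE.2, hcdf₁', measureReal_preimage_Ici hT₁ (hFcont θ₁) hcdf₁]
    ring

/-- Exact expression for the mdFWER of Procedure 2 (n = 2, θ₂ = 0)
when T₁ and T₂ are independent. -/
theorem mdFWER_two_hypotheses_expression_indep
    {Ω : Type*} [MeasurableSpace Ω] (Pr : Measure Ω) [IsProbabilityMeasure Pr]
    (F : ℝ → ℝ → ℝ)
    (hFcont : ∀ θ, Continuous (F θ))
    (hFmono : ∀ θ, Monotone (F θ))
    (hF0strict : StrictMono (F 0))
    (hFsym : ∀ x : ℝ, F 0 (-x) = 1 - F 0 x)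
    (hstoch : ∀ θ θ' : ℝ, θ ≤ θ' → ∀ x, F θ' x ≤ F θ x)
    (θ₁ : ℝ) (T₁ T₂ : Ω → ℝ) (hT₁ : Measurable T₁) (hT₂ : Measurable T₂)
    (hcdf₁ : ∀ x : ℝ, (Pr {ω | T₁ ω ≤ x}).toReal = F θ₁ x)
    (hcdf₂ : ∀ x : ℝ, (Pr {ω | T₂ ω ≤ x}).toReal = F 0 x)
    (hindep : IndepFun T₁ T₂ Pr)
    (α : ℝ) (hα : α ∈ Set.Ioo (0 : ℝ) 1)
    (c₁ c₂ : ℝ) (hc₁ : F 0 c₁ = α / 2) (hc₂ : F 0 c₂ = 1 - α / 2)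
    -- mdFWER of the directional fixed sequence procedure with both critical constants α
    (mdFWER : ℝ)
    (hmd : mdFWER = (Pr {ω | ∃ i : Fin 2,
        (∀ j : Fin 2, j ≤ i →
          2 * min (F 0 ((![T₁, T₂] j) ω)) (1 - F 0 ((![T₁, T₂] j) ω)) ≤ α) ∧
        ((![θ₁, 0] i : ℝ) = 0 ∨
          ((![θ₁, 0] i : ℝ) ≠ 0 ∧ (![θ₁, 0] i : ℝ) * (![T₁, T₂] i) ω < 0))}).toReal) :
    (0 < θ₁ → mdFWER = α + F θ₁ c₁ - α * F θ₁ c₂) ∧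
    (θ₁ < 0 → mdFWER = 1 + α * F θ₁ c₁ - F θ₁ c₂) :=
  mdFWER_two_hypotheses_expression_indep_general Pr F hFcont hF0strict hFsym θ₁ T₁ T₂ hT₁ hT₂ hcdf₁
    hcdf₂ hindep α hα c₁ c₂ hc₁ hc₂ mdFWER hmd
end

section
/- Let n = 2. If T_1 and T_2 are independent and the family {F_θ} satisfies the MLR assumption, then Procedure 2 (both critical constants equal to α) satisfies mdFWER ≤ α for every configuration of parameters (θ_1, θ_2) ∈ ℝ². -/
open MeasureTheory ProbabilityTheory Filter Topology

private lemma mlr_core' {g h : ℝ → ℝ} {A B : Set ℝ}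
    (hA : MeasurableSet A) (hB : MeasurableSet B)
    (hgA : IntegrableOn g A) (hgB : IntegrableOn g B)
    (hhA : IntegrableOn h A) (hhB : IntegrableOn h B)
    (hpt : ∀ x ∈ A, ∀ y ∈ B, h x * g y ≤ h y * g x) :
    (∫ x in A, h x) * (∫ y in B, g y) ≤ (∫ y in B, h y) * (∫ x in A, g x) := by
  have h1 : (∫ x in A, h x) * (∫ y in B, g y)
      = ∫ p in A ×ˢ B, h p.1 * g p.2 ∂((volume : Measure ℝ).prod volume) :=
    (setIntegral_prod_mul h g A B).symm
  have h2 : (∫ y in B, h y) * (∫ x in A, g x)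
      = ∫ p in A ×ˢ B, h p.2 * g p.1 ∂((volume : Measure ℝ).prod volume) := by
    rw [← Measure.prod_restrict]
    rw [show (fun p : ℝ × ℝ => h p.2 * g p.1) = (fun p : ℝ × ℝ => g p.1 * h p.2) by ext p; ring]
    rw [integral_prod_mul]
    ring
  rw [h1, h2]
  have hi1 : IntegrableOn (fun p : ℝ × ℝ => h p.1 * g p.2) (A ×ˢ B)
      ((volume : Measure ℝ).prod volume) := by
    rw [IntegrableOn, ← Measure.prod_restrict]
    exact hhA.mul_prod hgB
  have hi2 : IntegrableOn (fun p : ℝ × ℝ => h p.2 * g p.1) (A ×ˢ B)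
      ((volume : Measure ℝ).prod volume) := by
    rw [IntegrableOn, ← Measure.prod_restrict]
    exact (hgA.mul_prod hhB).congr (Eventually.of_forall fun p => by ring)
  exact setIntegral_mono_on hi1 hi2 (hA.prod hB) fun p hp => hpt p.1 hp.1 p.2 hp.2

private lemma prob_add_le_one' {Ω : Type*} [MeasurableSpace Ω] (Pr : Measure Ω)
    [IsProbabilityMeasure Pr] {s t : Set Ω} (hd : Disjoint s t) (ht : MeasurableSet t) :
    (Pr s).toReal + (Pr t).toReal ≤ 1 := by
  have hle : Pr s + Pr t ≤ 1 := by
    rw [← measure_union hd ht]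
    exact (measure_mono (Set.subset_univ _)).trans_eq measure_univ
  rw [← ENNReal.toReal_add (measure_ne_top _ _) (measure_ne_top _ _)]
  have := ENNReal.toReal_mono ENNReal.one_ne_top hle
  simpa using this

private lemma tail_bound' {Ω : Type*} [MeasurableSpace Ω] (Pr : Measure Ω)
    [IsProbabilityMeasure Pr] {T : Ω → ℝ} (hT : Measurable T) {G : ℝ → ℝ} (hGc : Continuous G)
    (hcdf : ∀ x, (Pr {ω | T ω ≤ x}).toReal = G x) (x : ℝ) :
    (Pr {ω | x ≤ T ω}).toReal ≤ 1 - G x := by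
  have key : ∀ n : ℕ, (Pr {ω | x ≤ T ω}).toReal ≤ 1 - G (x - 1/(n+1)) := by
    intro n
    have hd : Disjoint {ω | T ω ≤ x - 1/(n+1)} {ω | x ≤ T ω} := by
      rw [Set.disjoint_left]
      intro ω h1 h2
      simp only [Set.mem_setOf_eq] at h1 h2
      have : (0:ℝ) < 1/(n+1) := by positivity
      linarith
    have h1 := prob_add_le_one' Pr hd (measurableSet_le measurable_const hT)
    rw [hcdf] at h1; linarith
  have hlim : Tendsto (fun n : ℕ => 1 - G (x - 1/(n+1))) atTop (𝓝 (1 - G x)) := by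
    have : Tendsto (fun n : ℕ => x - 1/(n+1)) atTop (𝓝 x) := by
      have h2 := tendsto_one_div_add_atTop_nhds_zero_nat.const_sub (b := x)
      simpa using h2
    exact tendsto_const_nhds.sub ((hGc.tendsto x).comp this)
  exact ge_of_tendsto hlim (Eventually.of_forall key)

private lemma cdf_tendsto_one' {Ω : Type*} [MeasurableSpace Ω] (Pr : Measure Ω)
    [IsProbabilityMeasure Pr] {T : Ω → ℝ} (hT : Measurable T) :
    Tendsto (fun n : ℕ => (Pr {ω | T ω ≤ (n:ℝ)}).toReal) atTop (𝓝 1) := by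
  have h1 : Tendsto (fun x : ℝ => (Pr.map T) (Set.Iic x)) atTop (𝓝 ((Pr.map T) Set.univ)) :=
    tendsto_measure_Iic_atTop _
  have h2 := h1.comp (tendsto_natCast_atTop_atTop (R := ℝ))
  have huniv : (Pr.map T) Set.univ = 1 := by
    rw [Measure.map_apply hT MeasurableSet.univ]; simp
  rw [huniv] at h2
  have h4 := (ENNReal.tendsto_toReal ENNReal.one_ne_top).comp h2
  rw [ENNReal.toReal_one] at h4
  have heq : (fun n : ℕ => (Pr {ω | T ω ≤ (n:ℝ)}).toReal)
      = ENNReal.toReal ∘ ((fun x : ℝ => (Pr.map T) (Set.Iic x)) ∘ (Nat.cast : ℕ → ℝ)) := by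
    funext n
    simp only [Function.comp_apply]
    rw [Measure.map_apply hT measurableSet_Iic]
    rfl
  rw [heq]
  exact h4

private lemma cdf_small_at_bot' {Ω : Type*} [MeasurableSpace Ω] (Pr : Measure Ω)
    [IsProbabilityMeasure Pr] {T : Ω → ℝ} (hT : Measurable T) {ε : ℝ} (hε : 0 < ε) :
    ∃ a : ℝ, (Pr {ω | T ω ≤ a}).toReal < ε := by
  have h1 : Tendsto (fun x : ℝ => (Pr.map T) (Set.Ici x)) atBot (𝓝 ((Pr.map T) Set.univ)) :=
    tendsto_measure_Ici_atBot _
  rw [Measure.map_apply hT MeasurableSet.univ, Set.preimage_univ, measure_univ] at h1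
  have h2 := (ENNReal.tendsto_toReal ENNReal.one_ne_top).comp h1
  rw [ENNReal.toReal_one] at h2
  obtain ⟨b, hb⟩ := (h2.eventually (eventually_gt_nhds (by linarith : 1 - ε < 1))).exists
  refine ⟨b - 1, ?_⟩
  have hd : Disjoint {ω | T ω ≤ b - 1} (T ⁻¹' Set.Ici b) := by
    rw [Set.disjoint_left]; intro ω h1' h2'
    simp only [Set.mem_setOf_eq, Set.mem_preimage, Set.mem_Ici] at h1' h2'; linarith
  have h1' := prob_add_le_one' Pr hd (hT measurableSet_Ici)
  simp only [Function.comp_apply, Measure.map_apply hT measurableSet_Ici] at hb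
  linarith

set_option maxHeartbeats 2000000 in
/-- Lemma 3: For n = 2, under independence of T₁, T₂ and the MLR
assumption on the family {F_θ}, Procedure 2 (both critical constants equal to α)
satisfies mdFWER ≤ α for every configuration of parameters (θ₁, θ₂). -/
theorem procedure2_controls_mdFWER_two_indep_MLR
    {Ω : Type*} [MeasurableSpace Ω] (Pr : Measure Ω) [IsProbabilityMeasure Pr]
    (F : ℝ → ℝ → ℝ)
    (hFcont : ∀ θ, Continuous (F θ))
    (hFmono : ∀ θ, Monotone (F θ))
    (hF0strict : StrictMono (F 0))
    (hFsym : ∀ x : ℝ, F 0 (-x) = 1 - F 0 x)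
    (hstoch : ∀ θ θ' : ℝ, θ ≤ θ' → ∀ x, F θ' x ≤ F θ x)
    -- MLR assumption: each F_θ has a density f_θ and likelihood ratios are monotone
    (f : ℝ → ℝ → ℝ)
    (hf_nonneg : ∀ θ x, 0 ≤ f θ x)
    (hf_meas : ∀ θ, Measurable (f θ))
    (hf_cdf : ∀ θ x, F θ x = ∫ t in Set.Iic x, f θ t)
    (hMLR : ∀ θ θ' : ℝ, θ < θ' → ∀ x₁ x₂ : ℝ, x₁ < x₂ →
      f θ' x₁ * f θ x₂ ≤ f θ' x₂ * f θ x₁)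
    (θ₁ θ₂ : ℝ) (T₁ T₂ : Ω → ℝ) (hT₁ : Measurable T₁) (hT₂ : Measurable T₂)
    (hcdf₁ : ∀ x : ℝ, (Pr {ω | T₁ ω ≤ x}).toReal = F θ₁ x)
    (hcdf₂ : ∀ x : ℝ, (Pr {ω | T₂ ω ≤ x}).toReal = F θ₂ x)
    (hindep : IndepFun T₁ T₂ Pr)
    (α : ℝ) (hα : α ∈ Set.Ioo (0 : ℝ) 1) :
    (Pr {ω | ∃ i : Fin 2,
        (∀ j : Fin 2, j ≤ i →
          2 * min (F 0 ((![T₁, T₂] j) ω)) (1 - F 0 ((![T₁, T₂] j) ω)) ≤ α) ∧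
        ((![θ₁, θ₂] i : ℝ) = 0 ∨
          ((![θ₁, θ₂] i : ℝ) ≠ 0 ∧ (![θ₁, θ₂] i : ℝ) * (![T₁, T₂] i) ω < 0))}).toReal
      ≤ α := by
  obtain ⟨hα0, hα1⟩ := hα
  -- basic facts about F
  have hF00 : F 0 0 = 1/2 := by have := hFsym 0; norm_num at this; linarith
  have hFθ₁nonneg : ∀ x, 0 ≤ F θ₁ x := fun x => (hcdf₁ x) ▸ ENNReal.toReal_nonneg
  have hFθ₂nonneg : ∀ x, 0 ≤ F θ₂ x := fun x => (hcdf₂ x) ▸ ENNReal.toReal_nonneg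
  have hprob_le_one : ∀ s : Set Ω, (Pr s).toReal ≤ 1 := by
    intro s
    have := ENNReal.toReal_mono ENNReal.one_ne_top (prob_le_one (μ := Pr) (s := s))
    simpa using this
  have hFθ₁le1 : ∀ x, F θ₁ x ≤ 1 := fun x => (hcdf₁ x) ▸ hprob_le_one _
  have hFθ₂le1 : ∀ x, F θ₂ x ≤ 1 := fun x => (hcdf₂ x) ▸ hprob_le_one _
  have hF0nonneg : ∀ x, 0 ≤ F 0 x := by
    intro x
    rcases le_total θ₁ 0 with h | h
    · have h2 := hFsym (-x); rw [neg_neg] at h2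
      have h3 := hstoch θ₁ 0 h (-x)
      have h4 := hFθ₁le1 (-x)
      linarith
    · exact le_trans (hFθ₁nonneg x) (hstoch 0 θ₁ h x)
  have hF0le1 : ∀ x, F 0 x ≤ 1 := by
    intro x
    have := hF0nonneg (-x)
    have h2 := hFsym x
    linarith
  -- existence of c₁ with F 0 c₁ = α/2
  have hex : ∃ a : ℝ, F 0 a < α / 2 := by
    rcases le_total θ₁ 0 with h | h
    · obtain ⟨a, ha⟩ := cdf_small_at_bot' Pr hT₁ (by linarith : (0:ℝ) < α/2)
      rw [hcdf₁] at ha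
      exact ⟨a, lt_of_le_of_lt (hstoch θ₁ 0 h a) ha⟩
    · have hten := cdf_tendsto_one' Pr hT₁
      have hev := hten.eventually (eventually_gt_nhds (by linarith : 1 - α/2 < 1))
      obtain ⟨n, hn⟩ := hev.exists
      rw [hcdf₁] at hn
      refine ⟨-(n:ℝ), ?_⟩
      rw [hFsym]
      have := hstoch 0 θ₁ h (n:ℝ)
      linarith
  obtain ⟨a, ha⟩ := hex
  have ha0 : a < 0 := by
    have : F 0 a < F 0 0 := by rw [hF00]; linarith
    exact hF0strict.lt_iff_lt.mp this
  obtain ⟨c₁, hc₁mem, hc₁⟩ : ∃ c₁ ∈ Set.Icc a 0, F 0 c₁ = α/2 := by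
    have := intermediate_value_Icc ha0.le (hFcont 0).continuousOn
    exact this ⟨ha.le, by rw [hF00]; linarith⟩
  set c₂ : ℝ := -c₁ with hc₂def
  have hc₂ : F 0 c₂ = 1 - α/2 := by rw [hc₂def, hFsym, hc₁]
  have hc₁neg : c₁ < 0 := hF0strict.lt_iff_lt.mp (by rw [hc₁, hF00]; linarith)
  have hc₂pos : 0 < c₂ := by simp [hc₂def]; linarith
  have hc₁₂ : c₁ < c₂ := by linarith
  -- rejection characterization
  have hrej : ∀ t : ℝ, (2 * min (F 0 t) (1 - F 0 t) ≤ α) ↔ (t ≤ c₁ ∨ c₂ ≤ t) := by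
    intro t
    have h1 : (F 0 t ≤ α/2) ↔ t ≤ c₁ := by rw [← hc₁]; exact hF0strict.le_iff_le
    have h2 : (1 - F 0 t ≤ α/2) ↔ c₂ ≤ t := by
      rw [← hF0strict.le_iff_le (a := c₂) (b := t), hc₂]
      constructor <;> intro <;> linarith
    constructor
    · intro h
      rcases min_le_iff.mp (by linarith : min (F 0 t) (1 - F 0 t) ≤ α/2) with h' | h'
      · exact Or.inl (h1.mp h')
      · exact Or.inr (h2.mp h')
    · rintro (h | h)
      · have := min_le_left (F 0 t) (1 - F 0 t); have := h1.mpr h; linarith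
      · have := min_le_right (F 0 t) (1 - F 0 t); have := h2.mpr h; linarith
  -- event set rewriting
  have hAeq : {ω | ∃ i : Fin 2,
        (∀ j : Fin 2, j ≤ i →
          2 * min (F 0 ((![T₁, T₂] j) ω)) (1 - F 0 ((![T₁, T₂] j) ω)) ≤ α) ∧
        ((![θ₁, θ₂] i : ℝ) = 0 ∨
          ((![θ₁, θ₂] i : ℝ) ≠ 0 ∧ (![θ₁, θ₂] i : ℝ) * (![T₁, T₂] i) ω < 0))}
      = {ω | ((T₁ ω ≤ c₁ ∨ c₂ ≤ T₁ ω) ∧ (θ₁ = 0 ∨ (θ₁ ≠ 0 ∧ θ₁ * T₁ ω < 0))) ∨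
          ((T₁ ω ≤ c₁ ∨ c₂ ≤ T₁ ω) ∧ (T₂ ω ≤ c₁ ∨ c₂ ≤ T₂ ω) ∧
            (θ₂ = 0 ∨ (θ₂ ≠ 0 ∧ θ₂ * T₂ ω < 0)))} := by
    ext ω
    have hj0 : ∀ (Q : Fin 2 → Prop), (∀ j, j ≤ (0:Fin 2) → Q j) ↔ Q 0 := by
      intro Q
      constructor
      · exact fun h => h 0 le_rfl
      · intro h j hj
        fin_cases j
        · exact h
        · exact absurd hj (by decide)
    have hj1 : ∀ (Q : Fin 2 → Prop), (∀ j, j ≤ (1:Fin 2) → Q j) ↔ Q 0 ∧ Q 1 := by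
      intro Q
      constructor
      · exact fun h => ⟨h 0 (by decide), h 1 le_rfl⟩
      · rintro ⟨h0, h1⟩ j hj
        fin_cases j
        · exact h0
        · exact h1
    simp only [Set.mem_setOf_eq, Fin.exists_fin_two, hj0, hj1,
      Matrix.cons_val_zero, Matrix.cons_val_one, Matrix.head_cons, hrej]
    tauto
  rw [hAeq]
  -- helpers for probability arithmetic
  have hPmono : ∀ {s t : Set Ω}, s ⊆ t → (Pr s).toReal ≤ (Pr t).toReal :=
    fun h => ENNReal.toReal_mono (measure_ne_top _ _) (measure_mono h)
  have hPunion : ∀ s t : Set Ω, (Pr (s ∪ t)).toReal ≤ (Pr s).toReal + (Pr t).toReal := by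
    intro s t
    rw [← ENNReal.toReal_add (measure_ne_top _ _) (measure_ne_top _ _)]
    exact ENNReal.toReal_mono
      (ENNReal.add_ne_top.mpr ⟨measure_ne_top _ _, measure_ne_top _ _⟩) (measure_union_le s t)
  -- integral splitting helper
  have hIoc : ∀ θ b b', b ≤ b' → IntegrableOn (f θ) (Set.Iic b') →
      ∫ t in Set.Ioc b b', f θ t = F θ b' - F θ b := by
    intro θ b b' hbb hint
    have hdisj : Disjoint (Set.Iic b) (Set.Ioc b b') := Set.Iic_disjoint_Ioc le_rfl
    have hsplit := setIntegral_union (μ := (volume : Measure ℝ)) (f := f θ) hdisj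
      measurableSet_Ioc (hint.mono_set (Set.Iic_subset_Iic.mpr hbb))
      (hint.mono_set Set.Ioc_subset_Iic_self)
    rw [Set.Iic_union_Ioc_eq_Iic hbb] at hsplit
    rw [hf_cdf θ b', hf_cdf θ b, hsplit]
    ring
  -- nonzero integral forces integrability
  have hint_of_ne : ∀ θ x, F θ x ≠ 0 → IntegrableOn (f θ) (Set.Iic x) := by
    intro θ x hne
    by_contra hni
    exact hne (by rw [hf_cdf θ x]; exact integral_undef hni)
  -- bound for the second-test error probability
  set s₂ : Set ℝ := {t : ℝ | (t ≤ c₁ ∨ c₂ ≤ t) ∧ (θ₂ = 0 ∨ (θ₂ ≠ 0 ∧ θ₂ * t < 0))} with hs₂def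
  have hs₂m : MeasurableSet s₂ := by
    simp only [hs₂def, Set.setOf_and, Set.setOf_or]
    exact ((measurableSet_le measurable_id measurable_const).union
      (measurableSet_le measurable_const measurable_id)).inter
      ((MeasurableSet.const _).union ((MeasurableSet.const _).inter
        (measurableSet_lt (measurable_id.const_mul θ₂) measurable_const)))
  have hq₂pos : 0 ≤ (Pr (T₂ ⁻¹' s₂)).toReal := ENNReal.toReal_nonneg
  have htail₂ := tail_bound' Pr hT₂ (hFcont θ₂) hcdf₂
  have htail₁ := tail_bound' Pr hT₁ (hFcont θ₁) hcdf₁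
  have hq₂ : (Pr (T₂ ⁻¹' s₂)).toReal ≤ α := by
    rcases lt_trichotomy θ₂ 0 with h | h | h
    · have hsub : T₂ ⁻¹' s₂ ⊆ {ω | c₂ ≤ T₂ ω} := by
        intro ω hω
        obtain ⟨hr, he⟩ := hω
        rcases he with he | ⟨_, he⟩
        · exact absurd he h.ne
        · have hTpos : 0 < T₂ ω := by nlinarith
          rcases hr with hr | hr
          · linarith
          · exact hr
      calc (Pr (T₂ ⁻¹' s₂)).toReal ≤ (Pr {ω | c₂ ≤ T₂ ω}).toReal := hPmono hsub
        _ ≤ 1 - F θ₂ c₂ := htail₂ c₂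
        _ ≤ 1 - F 0 c₂ := by linarith [hstoch θ₂ 0 h.le c₂]
        _ ≤ α := by rw [hc₂]; linarith
    · have hsub : T₂ ⁻¹' s₂ ⊆ {ω | T₂ ω ≤ c₁} ∪ {ω | c₂ ≤ T₂ ω} := by
        intro ω hω
        exact hω.1.imp id id
      calc (Pr (T₂ ⁻¹' s₂)).toReal
          ≤ (Pr {ω | T₂ ω ≤ c₁}).toReal + (Pr {ω | c₂ ≤ T₂ ω}).toReal :=
            le_trans (hPmono hsub) (hPunion _ _)
        _ ≤ F θ₂ c₁ + (1 - F θ₂ c₂) := by rw [hcdf₂]; linarith [htail₂ c₂]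
        _ = α := by rw [h, hc₁, hc₂]; ring
    · have hsub : T₂ ⁻¹' s₂ ⊆ {ω | T₂ ω ≤ c₁} := by
        intro ω hω
        obtain ⟨hr, he⟩ := hω
        rcases he with he | ⟨_, he⟩
        · exact absurd he h.ne'
        · have hTneg : T₂ ω < 0 := by nlinarith
          rcases hr with hr | hr
          · exact hr
          · linarith
      calc (Pr (T₂ ⁻¹' s₂)).toReal ≤ (Pr {ω | T₂ ω ≤ c₁}).toReal := hPmono hsub
        _ = F θ₂ c₁ := hcdf₂ c₁
        _ ≤ F 0 c₁ := hstoch 0 θ₂ h.le c₁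
        _ ≤ α := by rw [hc₁]; linarith
  -- main case split
  by_cases h₁ : θ₁ = 0
  · -- θ₁ = 0 : the whole event is contained in the rejection event for T₁
    have hsub : {ω | ((T₁ ω ≤ c₁ ∨ c₂ ≤ T₁ ω) ∧ (θ₁ = 0 ∨ (θ₁ ≠ 0 ∧ θ₁ * T₁ ω < 0))) ∨
          ((T₁ ω ≤ c₁ ∨ c₂ ≤ T₁ ω) ∧ (T₂ ω ≤ c₁ ∨ c₂ ≤ T₂ ω) ∧
            (θ₂ = 0 ∨ (θ₂ ≠ 0 ∧ θ₂ * T₂ ω < 0)))}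
        ⊆ {ω | T₁ ω ≤ c₁} ∪ {ω | c₂ ≤ T₁ ω} := by
      rintro ω (⟨hr, _⟩ | ⟨hr, _, _⟩) <;> exact hr.imp id id
    calc (Pr _).toReal ≤ (Pr {ω | T₁ ω ≤ c₁}).toReal + (Pr {ω | c₂ ≤ T₁ ω}).toReal :=
          le_trans (hPmono hsub) (hPunion _ _)
      _ ≤ F θ₁ c₁ + (1 - F θ₁ c₂) := by rw [hcdf₁]; linarith [htail₁ c₂]
      _ = α := by rw [h₁, hc₁, hc₂]; ring
  · -- θ₁ ≠ 0
    set s₁ : Set ℝ := {t : ℝ | (t ≤ c₁ ∨ c₂ ≤ t) ∧ 0 ≤ θ₁ * t} with hs₁def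
    have hs₁m : MeasurableSet s₁ := by
      simp only [hs₁def, Set.setOf_and, Set.setOf_or]
      exact ((measurableSet_le measurable_id measurable_const).union
        (measurableSet_le measurable_const measurable_id)).inter
        (measurableSet_le measurable_const (measurable_id.const_mul θ₁))
    set E₁ : Set Ω := {ω | (T₁ ω ≤ c₁ ∨ c₂ ≤ T₁ ω) ∧ θ₁ * T₁ ω < 0} with hE₁def
    have hsub : {ω | ((T₁ ω ≤ c₁ ∨ c₂ ≤ T₁ ω) ∧ (θ₁ = 0 ∨ (θ₁ ≠ 0 ∧ θ₁ * T₁ ω < 0))) ∨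
          ((T₁ ω ≤ c₁ ∨ c₂ ≤ T₁ ω) ∧ (T₂ ω ≤ c₁ ∨ c₂ ≤ T₂ ω) ∧
            (θ₂ = 0 ∨ (θ₂ ≠ 0 ∧ θ₂ * T₂ ω < 0)))}
        ⊆ E₁ ∪ (T₁ ⁻¹' s₁ ∩ T₂ ⁻¹' s₂) := by
      rintro ω (⟨hr, he⟩ | ⟨hr, hr₂, he₂⟩)
      · rcases he with he | ⟨_, he⟩
        · exact absurd he h₁
        · exact Or.inl ⟨hr, he⟩
      · rcases lt_or_ge (θ₁ * T₁ ω) 0 with hs | hs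
        · exact Or.inl ⟨hr, hs⟩
        · exact Or.inr ⟨⟨hr, hs⟩, ⟨hr₂, he₂⟩⟩
    have hprod : (Pr (T₁ ⁻¹' s₁ ∩ T₂ ⁻¹' s₂)).toReal
        = (Pr (T₁ ⁻¹' s₁)).toReal * (Pr (T₂ ⁻¹' s₂)).toReal := by
      rw [ProbabilityTheory.indepFun_iff_measure_inter_preimage_eq_mul.mp hindep s₁ s₂ hs₁m hs₂m, ENNReal.toReal_mul]
    set u : ℝ := F θ₁ c₁ with hudef
    set v : ℝ := F θ₁ c₂ with hvdef
    have huv : u ≤ v := hFmono θ₁ hc₁₂.le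
    have hu0 : 0 ≤ u := hFθ₁nonneg c₁
    have hv1 : v ≤ 1 := hFθ₁le1 c₂
    rcases lt_or_gt_of_ne h₁ with hneg | hpos
    · -- θ₁ < 0
      have hE₁sub : E₁ ⊆ {ω | c₂ ≤ T₁ ω} := by
        intro ω ⟨hr, he⟩
        have : 0 < T₁ ω := by nlinarith
        rcases hr with hr | hr
        · linarith
        · exact hr
      have hB₁sub : T₁ ⁻¹' s₁ ⊆ {ω | T₁ ω ≤ c₁} := by
        intro ω ⟨hr, he⟩
        have : T₁ ω ≤ 0 := by nlinarith
        rcases hr with hr | hr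
        · exact hr
        · linarith
      -- MLR limit argument: (1-α)*(1-v) ≤ (α/2)*(v-u)
      have hkey : (1-α) * (1-v) ≤ (α/2) * (v-u) := by
        have hten : Tendsto (fun n : ℕ => F θ₁ n) atTop (𝓝 1) := by
          have := cdf_tendsto_one' Pr hT₁
          simpa only [hcdf₁] using this
        have hev : ∀ᶠ n : ℕ in atTop, (1-α) * (F θ₁ n - v) ≤ (α/2) * (v - u) := by
          have hev1 := hten.eventually (eventually_gt_nhds (by linarith : (1:ℝ)/2 < 1))
          have hev2 : ∀ᶠ n : ℕ in atTop, c₂ ≤ (n:ℝ) := by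
            obtain ⟨m, hm⟩ := exists_nat_ge c₂
            exact eventually_atTop.mpr ⟨m, fun n hn => le_trans hm (Nat.cast_le.mpr hn)⟩
          filter_upwards [hev1, hev2] with n hn1 hn2
          have hintθ : IntegrableOn (f θ₁) (Set.Iic (n:ℝ)) :=
            hint_of_ne θ₁ n (by linarith)
          have hint0 : IntegrableOn (f 0) (Set.Iic (n:ℝ)) := by
            apply hint_of_ne 0 n
            have := hFmono 0 (le_trans hc₁₂.le hn2)
            rw [hc₂] at *
            nlinarith [hFmono 0 hn2]
          have hcore := mlr_core' (g := f θ₁) (h := f 0)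
            (A := Set.Ioc c₁ c₂) (B := Set.Ioc c₂ (n:ℝ))
            measurableSet_Ioc measurableSet_Ioc
            ((hintθ.mono_set (Set.Ioc_subset_Iic_self.trans (Set.Iic_subset_Iic.mpr hn2))))
            (hintθ.mono_set Set.Ioc_subset_Iic_self)
            ((hint0.mono_set (Set.Ioc_subset_Iic_self.trans (Set.Iic_subset_Iic.mpr hn2))))
            (hint0.mono_set Set.Ioc_subset_Iic_self)
            (fun x hx y hy => hMLR θ₁ 0 hneg x y (lt_of_le_of_lt hx.2 hy.1))
          rw [hIoc 0 c₁ c₂ hc₁₂.le (hint0.mono_set (Set.Iic_subset_Iic.mpr hn2)),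
            hIoc θ₁ c₁ c₂ hc₁₂.le (hintθ.mono_set (Set.Iic_subset_Iic.mpr hn2)),
            hIoc 0 c₂ n hn2 hint0, hIoc θ₁ c₂ n hn2 hintθ, hc₁, hc₂] at hcore
          have hF0n : F 0 (n:ℝ) ≤ 1 := hF0le1 n
          nlinarith [hFθ₁nonneg (n:ℝ), hFmono θ₁ hn2]
        have hlim : Tendsto (fun n : ℕ => (1-α) * (F θ₁ n - v)) atTop (𝓝 ((1-α)*(1-v))) :=
          (hten.sub_const v).const_mul (1-α)
        exact le_of_tendsto hlim hev
      have h1v : 0 ≤ 1 - v := by nlinarith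
      have hfinal : 1 - v ≤ (1 - u) * α := by nlinarith
      calc (Pr _).toReal ≤ (Pr E₁).toReal
            + (Pr (T₁ ⁻¹' s₁)).toReal * (Pr (T₂ ⁻¹' s₂)).toReal := by
            rw [← hprod]; exact le_trans (hPmono hsub) (hPunion _ _)
        _ ≤ (1 - v) + u * α := by
            have h1 : (Pr E₁).toReal ≤ 1 - v := le_trans (hPmono hE₁sub) (htail₁ c₂)
            have h2 : (Pr (T₁ ⁻¹' s₁)).toReal ≤ u := by
              rw [hudef]; rw [← hcdf₁ c₁]; exact hPmono hB₁sub
            have h3 : (Pr (T₁ ⁻¹' s₁)).toReal * (Pr (T₂ ⁻¹' s₂)).toReal ≤ u * α :=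
              mul_le_mul h2 hq₂ hq₂pos hu0
            linarith
        _ ≤ α := by nlinarith
    · -- θ₁ > 0
      have hE₁sub : E₁ ⊆ {ω | T₁ ω ≤ c₁} := by
        intro ω ⟨hr, he⟩
        have : T₁ ω < 0 := by nlinarith
        rcases hr with hr | hr
        · exact hr
        · linarith
      have hB₁sub : T₁ ⁻¹' s₁ ⊆ {ω | c₂ ≤ T₁ ω} := by
        intro ω ⟨hr, he⟩
        have : 0 ≤ T₁ ω := by nlinarith
        rcases hr with hr | hr
        · linarith
        · exact hr
      -- MLR argument: u ≤ v * α
      have hkey : u ≤ v * α := by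
        by_cases hv : IntegrableOn (f θ₁) (Set.Iic c₂)
        · have hint0 : IntegrableOn (f 0) (Set.Iic c₂) :=
            hint_of_ne 0 c₂ (by rw [hc₂]; intro hcon; linarith)
          have hcore := mlr_core' (g := f 0) (h := f θ₁)
            (A := Set.Iic c₁) (B := Set.Ioc c₁ c₂)
            measurableSet_Iic measurableSet_Ioc
            (hint0.mono_set (Set.Iic_subset_Iic.mpr hc₁₂.le))
            (hint0.mono_set Set.Ioc_subset_Iic_self)
            (hv.mono_set (Set.Iic_subset_Iic.mpr hc₁₂.le))
            (hv.mono_set Set.Ioc_subset_Iic_self)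
            (fun x hx y hy => hMLR 0 θ₁ hpos x y (lt_of_le_of_lt hx hy.1))
          rw [hIoc 0 c₁ c₂ hc₁₂.le hint0, hIoc θ₁ c₁ c₂ hc₁₂.le hv,
            ← hf_cdf θ₁ c₁, ← hf_cdf 0 c₁, hc₁, hc₂] at hcore
          nlinarith
        · have hv0 : v = 0 := by rw [hvdef, hf_cdf θ₁ c₂]; exact integral_undef hv
          nlinarith
      have hvα : 0 ≤ v := le_trans hu0 huv
      calc (Pr _).toReal ≤ (Pr E₁).toReal
            + (Pr (T₁ ⁻¹' s₁)).toReal * (Pr (T₂ ⁻¹' s₂)).toReal := by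
            rw [← hprod]; exact le_trans (hPmono hsub) (hPunion _ _)
        _ ≤ u + (1 - v) * α := by
            have h1 : (Pr E₁).toReal ≤ u := by
              rw [hudef, ← hcdf₁ c₁]; exact hPmono hE₁sub
            have h2 : (Pr (T₁ ⁻¹' s₁)).toReal ≤ 1 - v :=
              le_trans (hPmono hB₁sub) (htail₁ c₂)
            have h1v : 0 ≤ 1 - v := le_trans ENNReal.toReal_nonneg h2
            have h3 : (Pr (T₁ ⁻¹' s₁)).toReal * (Pr (T₂ ⁻¹' s₂)).toReal ≤ (1-v) * α :=
              mul_le_mul h2 hq₂ hq₂pos h1v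
            linarith
        _ ≤ α := by nlinarith
end

section
/- Let c = tan(19π/40). Then 1/2 + arctan(−c − 100)/π > (1/20)·(1/2 + arctan(c − 100)/π). Equivalently, for the Cauchy location family F_θ(x) = 1/2 + arctan(x − θ)/π with α = 0.05, c = F_0^{-1}(1 − α/2) and θ_1 = 100, one has F_{θ_1}(−c) > α·F_{θ_1}(c), so that α + F_{θ_1}(−c) − α·F_{θ_1}(c) > α. -/
/-!
Both values of the Cauchy cdf lie in the lower tail, where `F_θ(x) = arctan (1 / (θ - x)) / π`
and `arctan t` is squeezed between `t / 2` and `t` for small `t > 0`. Since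
`c = tan (π / 2 - π / 40) < 40 / π < 13`, this gives
`α · F_θ₁(c) < 1 / (20 · 87 π) < 1 / (226 π) < F_θ₁(-c)`.
-/

open Real

noncomputable def cauchyCDF (θ x : ℝ) : ℝ := 1 / 2 + arctan (x - θ) / π

theorem cauchyCDF_of_lt {θ x : ℝ} (h : x < θ) : cauchyCDF θ x = arctan (θ - x)⁻¹ / π := by
  rw [cauchyCDF, ← neg_sub x θ, inv_neg, arctan_neg, arctan_inv_of_neg (sub_neg.2 h)]
  field_simp
  ring

theorem arctan_lt_self {x : ℝ} (hx : 0 < x) : arctan x < x := by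
  simpa only [tan_arctan] using
    lt_tan (arctan_pos.2 hx) (arctan_lt_pi_div_two x)

theorem tan_lt_two_mul {y : ℝ} (h0 : 0 < y) (h1 : y ≤ 1) : tan y < 2 * y := by
  have hcos : 1 / 2 ≤ cos y := by nlinarith [one_sub_sq_div_two_le_cos (x := y)]
  rw [tan_eq_sin_div_cos, div_lt_iff₀ (by linarith)]
  nlinarith [sin_lt h0]

theorem div_two_lt_arctan {x : ℝ} (h0 : 0 < x) (h1 : x ≤ 2) : x / 2 < arctan x := by
  have := tan_lt_two_mul (half_pos h0) (by linarith)
  rw [mul_div_cancel₀ x two_ne_zero] at this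
  have hπ : 1 < π / 2 := by linarith [pi_gt_three]
  simpa only [arctan_tan (x := x / 2) (by linarith) (by linarith)] using arctan_strictMono this

theorem tan_pi_div_two_sub_lt_inv {x : ℝ} (h0 : 0 < x) (h1 : x < π / 2) :
    tan (π / 2 - x) < x⁻¹ := by
  rw [tan_pi_div_two_sub]
  exact inv_strictAnti₀ h0 (lt_tan h0 h1)

theorem one_div_twenty_mul_cauchyCDF_lt_cauchyCDF_neg {c : ℝ} (hc0 : 0 < c) (hc : c < 13) :
    1 / 20 * cauchyCDF 100 c < cauchyCDF 100 (-c) := by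
  rw [cauchyCDF_of_lt (by linarith), cauchyCDF_of_lt (by linarith), sub_neg_eq_add,
    ← mul_div_assoc]
  gcongr
  have hupper : arctan (100 - c)⁻¹ < 1 / 87 :=
    calc arctan (100 - c)⁻¹ < (100 - c)⁻¹ := arctan_lt_self (by simp only [inv_pos]; linarith)
      _ < 1 / 87 := by rw [one_div]; exact inv_strictAnti₀ (by norm_num) (by linarith)
  have hlower : 1 / 226 < arctan (100 + c)⁻¹ :=
    calc (1 : ℝ) / 226 < (100 + c)⁻¹ / 2 := by
          have : (1 : ℝ) / 113 < (100 + c)⁻¹ := by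
            rw [one_div]; exact inv_strictAnti₀ (by positivity) (by linarith)
          linarith
      _ < arctan (100 + c)⁻¹ :=
          div_two_lt_arctan (by positivity)
            ((inv_lt_one_of_one_lt₀ (by linarith)).le.trans one_le_two)
  linarith

/-- Cauchy counterexample. With c = tan(19π/40) (the 1 − α/2 quantile of
the standard Cauchy distribution for α = 0.05 = 1/20) and θ₁ = 100, one has
F_{θ₁}(−c) > α·F_{θ₁}(c), where F_θ(x) = 1/2 + arctan(x − θ)/π; consequently
α + F_{θ₁}(−c) − α·F_{θ₁}(c) > α. -/
theorem cauchy_counterexample :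
    (1 / 20 : ℝ) * (1 / 2 + arctan (tan (19 * π / 40) - 100) / π)
      < 1 / 2 + arctan (-(tan (19 * π / 40)) - 100) / π ∧
    (1 / 20 : ℝ)
      < 1 / 20 + (1 / 2 + arctan (-(tan (19 * π / 40)) - 100) / π)
          - (1 / 20) * (1 / 2 + arctan (tan (19 * π / 40) - 100) / π) := by
  rw [show 19 * π / 40 = π / 2 - π / 40 by ring]
  have hπ : 3.1415 < π := pi_gt_d4.trans_le' (by norm_num)
  have hc0 : 0 < tan (π / 2 - π / 40) :=
    tan_pos_of_pos_of_lt_pi_div_two (by linarith) (by linarith)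
  have hc : tan (π / 2 - π / 40) < 13 :=
    calc tan (π / 2 - π / 40) < (π / 40)⁻¹ :=
          tan_pi_div_two_sub_lt_inv (by positivity) (by linarith)
      _ < 13 := by rw [inv_div, div_lt_iff₀ pi_pos]; linarith
  have key := one_div_twenty_mul_cauchyCDF_lt_cauchyCDF_neg hc0 hc
  unfold cauchyCDF at key
  exact ⟨key, by linarith⟩
end

section
/- Suppose θ_i > 0 for all i = 1,…,n, the family {F_θ} satisfies the MLR assumption, and T_1,…,T_n are positively regression dependent (Assumption 3). Then for every j ∈ {1,…,n} with Pr(T_1 > c_2, …, T_{j−1} > c_2) > 0, Pr(T_j < c_1 | T_1 > c_2, …, T_{j−1} > c_2) + α·Pr(T_j > c_2 | T_1 > c_2, …, T_{j−1} > c_2) ≤ α; in particular, for j = 1, Pr(T_1 < c_1) + α·Pr(T_1 > c_2) ≤ α. -/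
/-! Let `C = {T_l > c₂ for all l < j}`; it is the preimage of an upper orthant, whose indicator is
monotone, so positive regression dependence gives `Pr(C | T_j < c₁) ≤ Pr(C | T_j < c₂)`. The MLR
property bounds `Pr(T_j < c₁) / Pr(T_j < c₂)` by its value `(α/2)/(1 - α/2) ≤ α` at `θ = 0`.
Together, `Pr(T_j < c₁, C) ≤ α Pr(T_j < c₂, C)`, and adding `α Pr(T_j > c₂, C)` gives at most
`α Pr(C)`. -/

open MeasureTheory ProbabilityTheory Set

theorem setIntegral_mul_setIntegral_le {α : Type*} [MeasurableSpace α] {μ : Measure α}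
    {f g : α → ℝ} {s t : Set α} (hs : MeasurableSet s) (ht : MeasurableSet t)
    (hfs : IntegrableOn f s μ) (hgs : IntegrableOn g s μ)
    (hft : IntegrableOn f t μ) (hgt : IntegrableOn g t μ)
    (h : ∀ x ∈ s, ∀ y ∈ t, g x * f y ≤ g y * f x) :
    (∫ x in s, g x ∂μ) * (∫ y in t, f y ∂μ) ≤ (∫ x in s, f x ∂μ) * (∫ y in t, g y ∂μ) := by
  rw [← integral_mul_const, ← integral_mul_const]
  refine setIntegral_mono_on (hgs.mul_const _) (hfs.mul_const _) hs fun x hx => ?_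
  rw [← integral_const_mul, ← integral_const_mul]
  refine setIntegral_mono_on (hft.const_mul _) (hgt.const_mul _) ht fun y hy => ?_
  linarith [h x hx y hy]

/-- Monotone likelihood ratio of `g` over `f` makes `∫_{Iic c} g / ∫_{Iic c} f` nondecreasing
in `c`, written without division. -/
theorem integral_Iic_mul_le_of_mlr {μ : Measure ℝ} {f g : ℝ → ℝ} {c₁ c₂ : ℝ} (hc : c₁ ≤ c₂)
    (hmlr : ∀ x y, x < y → g x * f y ≤ g y * f x)
    (hf : IntegrableOn f (Iic c₂) μ) (hg : IntegrableOn g (Iic c₂) μ) :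
    (∫ x in Iic c₁, g x ∂μ) * (∫ x in Iic c₂, f x ∂μ)
      ≤ (∫ x in Iic c₁, f x ∂μ) * (∫ x in Iic c₂, g x ∂μ) := by
  have hsplit : ∀ h : ℝ → ℝ, IntegrableOn h (Iic c₂) μ →
      ∫ x in Iic c₂, h x ∂μ = (∫ x in Iic c₁, h x ∂μ) + ∫ x in Ioc c₁ c₂, h x ∂μ := fun h hh => by
    rw [← setIntegral_union (Iic_disjoint_Ioc le_rfl) measurableSet_Ioc
      (hh.mono_set (Iic_subset_Iic.2 hc)) (hh.mono_set Ioc_subset_Iic_self),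
      Iic_union_Ioc_eq_Iic hc]
  have hcross := setIntegral_mul_setIntegral_le measurableSet_Iic measurableSet_Ioc
    (hf.mono_set (Iic_subset_Iic.2 hc)) (hg.mono_set (Iic_subset_Iic.2 hc))
    (hf.mono_set Ioc_subset_Iic_self) (hg.mono_set Ioc_subset_Iic_self)
    fun x hx y hy => hmlr x y (lt_of_le_of_lt hx hy.1)
  rw [hsplit f hf, hsplit g hg]
  linarith

/-- With `F`, `G` the cdfs of `f`, `g`: `G(c₁)/G(c₂) ≤ F(c₁)/F(c₂) = (α/2)/(1 - α/2) ≤ α`. -/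
theorem integral_Iic_le_mul_of_mlr {μ : Measure ℝ} {f g : ℝ → ℝ} {α c₁ c₂ : ℝ} (hα : α ≤ 1)
    (hc : c₁ ≤ c₂) (hmlr : ∀ x y, x < y → g x * f y ≤ g y * f x)
    (hf₁ : ∫ x in Iic c₁, f x ∂μ = α / 2) (hf₂ : ∫ x in Iic c₂, f x ∂μ = 1 - α / 2)
    (hg₁ : 0 ≤ ∫ x in Iic c₁, g x ∂μ) (hg : ∫ x in Iic c₁, g x ∂μ ≤ ∫ x in Iic c₂, g x ∂μ) :
    ∫ x in Iic c₁, g x ∂μ ≤ α * ∫ x in Iic c₂, g x ∂μ := by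
  rcases eq_or_ne (∫ x in Iic c₂, g x ∂μ) 0 with hg₂ | hg₂
  · rw [hg₂] at hg ⊢
    linarith
  have hmlr := integral_Iic_mul_le_of_mlr hc hmlr
    (Integrable.of_integral_ne_zero (by rw [hf₂]; linarith)) (Integrable.of_integral_ne_zero hg₂)
  rw [hf₁, hf₂] at hmlr
  nlinarith

theorem measureReal_lt_eq_of_continuousWithinAt {Ω : Type*} [MeasurableSpace Ω] {μ : Measure Ω}
    [IsFiniteMeasure μ] {X : Ω → ℝ} {G : ℝ → ℝ} {x : ℝ}
    (hcdf : ∀ y, μ.real {ω | X ω ≤ y} = G y) (hG : ContinuousWithinAt G (Iio x) x) :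
    μ.real {ω | X ω < x} = G x := by
  refine le_antisymm ?_ ?_
  · exact hcdf x ▸ measureReal_mono fun ω (h : X ω < x) => h.le
  · refine le_of_tendsto hG (eventually_nhdsWithin_of_forall fun y (hy : y < x) => ?_)
    exact hcdf y ▸ measureReal_mono fun ω (h : X ω ≤ y) => h.trans_lt hy

theorem measureReal_lt_inter_add_measureReal_gt_inter_le {Ω : Type*} [MeasurableSpace Ω]
    {μ : Measure Ω} [IsFiniteMeasure μ] {X : Ω → ℝ} (hX : Measurable X) (c : ℝ) (C : Set Ω) :
    μ.real ({ω | X ω < c} ∩ C) + μ.real ({ω | c < X ω} ∩ C) ≤ μ.real C := by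
  have hsub : {ω | c < X ω} ∩ C ⊆ C \ {ω | X ω < c} :=
    fun ω ⟨h, hC⟩ => ⟨hC, fun h' : X ω < c => lt_asymm h h'⟩
  rw [inter_comm, ← measureReal_inter_add_sdiff (s := C) (measurableSet_lt hX measurable_const)]
  exact add_le_add le_rfl (measureReal_mono hsub)

theorem IsUpperSet.monotone_indicator_const {α β : Type*} [Preorder α] [Preorder β] [Zero β]
    {S : Set α} (hS : IsUpperSet S) {c : β} (hc : 0 ≤ c) : Monotone (S.indicator fun _ => c) := by
  intro x y hxy
  by_cases hx : x ∈ S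
  · rw [indicator_of_mem hx, indicator_of_mem (hS hxy hx)]
  · rw [indicator_of_notMem hx]
    exact indicator_nonneg (fun _ _ => hc) y

theorem setIntegral_indicator_one_comp {Ω E : Type*} [MeasurableSpace Ω] [MeasurableSpace E]
    {μ : Measure Ω} {Y : Ω → E} (hY : Measurable Y) {S : Set E} (hS : MeasurableSet S)
    (A : Set Ω) : ∫ ω in A, S.indicator 1 (Y ω) ∂μ = μ.real (A ∩ Y ⁻¹' S) := by
  simp_rw [← indicator_comp_right (g := 1) Y]
  rw [setIntegral_indicator (hY hS), Pi.one_comp, Pi.one_def, setIntegral_const, smul_eq_mul,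
    mul_one]

theorem measureReal_inter_le_mul_of_cond_le {Ω : Type*} [MeasurableSpace Ω] {μ : Measure Ω}
    [IsFiniteMeasure μ] {A A' E : Set Ω} {r : ℝ} (hr : 0 ≤ r) (hAA' : A ⊆ A')
    (hcond : μ A ≠ 0 → μ A' ≠ 0 →
      μ.real (A ∩ E) / μ.real A ≤ μ.real (A' ∩ E) / μ.real A')
    (hA : μ.real A ≤ r * μ.real A') : μ.real (A ∩ E) ≤ r * μ.real (A' ∩ E) := by
  rcases eq_or_ne (μ A) 0 with hA0 | hA0
  · rw [(measureReal_eq_zero_iff).2 (measure_mono_null inter_subset_left hA0)]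
    positivity
  have hA'0 : μ A' ≠ 0 := fun h => hA0 (measure_mono_null hAA' h)
  have hApos : 0 < μ.real A := ENNReal.toReal_pos hA0 (measure_ne_top μ A)
  have hA'pos : 0 < μ.real A' := ENNReal.toReal_pos hA'0 (measure_ne_top μ A')
  calc μ.real (A ∩ E) = μ.real A * (μ.real (A ∩ E) / μ.real A) := by field_simp
    _ ≤ r * μ.real A' * (μ.real (A' ∩ E) / μ.real A') := by
        gcongr ?_ * ?_
        exact hcond hA0 hA'0
    _ = r * μ.real (A' ∩ E) := by field_simp

theorem measureReal_inter_preimage_div_le_of_isUpperSet {Ω ι : Type*} [MeasurableSpace Ω]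
    {μ : Measure Ω} {Y : Ω → ι → ℝ} (hY : Measurable Y) {A A' : Set Ω}
    (hφ : ∀ φ : (ι → ℝ) → ℝ, Measurable φ → Monotone φ → (∃ C, ∀ x, |φ x| ≤ C) →
      μ A ≠ 0 → μ A' ≠ 0 →
        (∫ ω in A, φ (Y ω) ∂μ) / μ.real A ≤ (∫ ω in A', φ (Y ω) ∂μ) / μ.real A')
    {S : Set (ι → ℝ)} (hS : MeasurableSet S) (hSup : IsUpperSet S) (hA : μ A ≠ 0)
    (hA' : μ A' ≠ 0) :
    μ.real (A ∩ Y ⁻¹' S) / μ.real A ≤ μ.real (A' ∩ Y ⁻¹' S) / μ.real A' := by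
  have h := hφ (S.indicator 1) (measurable_one.indicator hS)
    (hSup.monotone_indicator_const zero_le_one)
    ⟨1, fun x => by simpa using norm_indicator_le_norm_self (1 : (ι → ℝ) → ℝ) x⟩ hA hA'
  rwa [setIntegral_indicator_one_comp hY hS, setIntegral_indicator_one_comp hY hS] at h

theorem conditional_error_bound_lemma5_general
    {Ω : Type*} [MeasurableSpace Ω] (Pr : Measure Ω) [IsProbabilityMeasure Pr]
    (F : ℝ → ℝ → ℝ)
    (hFcont : ∀ θ, Continuous (F θ))
    (hF0strict : StrictMono (F 0))
    -- MLR assumption (Assumption 2)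
    (f : ℝ → ℝ → ℝ)
    (hf_cdf : ∀ θ x, F θ x = ∫ t in Set.Iic x, f θ t)
    (hMLR : ∀ θ θ' : ℝ, θ < θ' → ∀ x₁ x₂ : ℝ, x₁ < x₂ →
      f θ' x₁ * f θ x₂ ≤ f θ' x₂ * f θ x₁)
    (n : ℕ) (θ : Fin n → ℝ) (hθpos : ∀ i, 0 < θ i)
    (T : Fin n → Ω → ℝ) (hT : ∀ i, Measurable (T i))
    (hcdf : ∀ i x, (Pr {ω | T i ω ≤ x}).toReal = F (θ i) x)
    -- Positive regression dependence (Assumption 3, all nulls false with θ_i > 0)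
    (hPRD : ∀ k : Fin n, ∀ φ : (Fin n → ℝ) → ℝ,
      Measurable φ → Monotone φ → (∃ C, ∀ x, |φ x| ≤ C) →
      ∀ u u' : ℝ, u ≤ u' →
        (Pr {ω | u ≤ T k ω} ≠ 0 → Pr {ω | u' ≤ T k ω} ≠ 0 →
          (∫ ω in {ω | u ≤ T k ω}, φ (fun i => T i ω) ∂Pr)
              / (Pr {ω | u ≤ T k ω}).toReal
            ≤ (∫ ω in {ω | u' ≤ T k ω}, φ (fun i => T i ω) ∂Pr)
              / (Pr {ω | u' ≤ T k ω}).toReal) ∧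
        (Pr {ω | T k ω < u} ≠ 0 → Pr {ω | T k ω < u'} ≠ 0 →
          (∫ ω in {ω | T k ω < u}, φ (fun i => T i ω) ∂Pr)
              / (Pr {ω | T k ω < u}).toReal
            ≤ (∫ ω in {ω | T k ω < u'}, φ (fun i => T i ω) ∂Pr)
              / (Pr {ω | T k ω < u'}).toReal))
    (α : ℝ) (hα : α ∈ Set.Ioo (0 : ℝ) 1)
    (c₁ c₂ : ℝ) (hc₁ : F 0 c₁ = α / 2) (hc₂ : F 0 c₂ = 1 - α / 2) :
    ∀ j : Fin n,
      Pr {ω | ∀ l : Fin n, l < j → c₂ < T l ω} ≠ 0 →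
      (Pr ({ω | T j ω < c₁} ∩ {ω | ∀ l : Fin n, l < j → c₂ < T l ω})).toReal
          / (Pr {ω | ∀ l : Fin n, l < j → c₂ < T l ω}).toReal
        + α * ((Pr ({ω | c₂ < T j ω} ∩ {ω | ∀ l : Fin n, l < j → c₂ < T l ω})).toReal
          / (Pr {ω | ∀ l : Fin n, l < j → c₂ < T l ω}).toReal)
        ≤ α := by
  intro j hC
  set C : Set Ω := {ω | ∀ l : Fin n, l < j → c₂ < T l ω}
  have hc : c₁ < c₂ := hF0strict.lt_iff_lt.1 (by rw [hc₁, hc₂]; linarith [hα.2])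
  have hcdf_lt : ∀ x, Pr.real {ω | T j ω < x} = F (θ j) x := fun x =>
    measureReal_lt_eq_of_continuousWithinAt (hcdf j) (hFcont _).continuousWithinAt
  have hratio : F (θ j) c₁ ≤ α * F (θ j) c₂ := by
    have hmono : F (θ j) c₁ ≤ F (θ j) c₂ := by
      rw [← hcdf_lt, ← hcdf_lt]
      exact measureReal_mono fun ω (h : T j ω < c₁) => h.trans hc
    have hnonneg : 0 ≤ F (θ j) c₁ := hcdf_lt c₁ ▸ measureReal_nonneg
    simp only [hf_cdf] at hc₁ hc₂ hmono hnonneg ⊢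
    exact integral_Iic_le_mul_of_mlr hα.2.le hc.le (hMLR 0 (θ j) (hθpos j)) hc₁ hc₂ hnonneg hmono
  have hupper : IsUpperSet ((Iio j).pi fun _ => Ioi c₂) :=
    fun x y hxy hx l hl => (hx l hl).trans_le (hxy l)
  have hcond := measureReal_inter_preimage_div_le_of_isUpperSet (measurable_pi_lambda _ hT)
    (fun φ hφ hmono hbdd => (hPRD j φ hφ hmono hbdd c₁ c₂ hc.le).2)
    (.pi (to_countable (Iio j)) fun _ _ => measurableSet_Ioi) hupper
  have hlow : Pr.real ({ω | T j ω < c₁} ∩ C) ≤ α * Pr.real ({ω | T j ω < c₂} ∩ C) :=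
    measureReal_inter_le_mul_of_cond_le hα.1.le (fun ω (h : T j ω < c₁) => h.trans hc) hcond
      (by rwa [hcdf_lt, hcdf_lt])
  have hsplit := measureReal_lt_inter_add_measureReal_gt_inter_le (μ := Pr) (hT j) c₂ C
  have hCpos : 0 < Pr.real C := ENNReal.toReal_pos hC (measure_ne_top Pr C)
  simp only [← measureReal_def]
  rw [mul_div_assoc', ← add_div, div_le_iff₀ hCpos]
  linarith [mul_le_mul_of_nonneg_left hsplit hα.1.le]

/-- Lemma 5: If all θ_i > 0, the family satisfies MLR and the
statistics are positively regression dependent, then for every j with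
Pr(T₁ > c₂,…,T_{j−1} > c₂) > 0,
Pr(T_j < c₁ | ·) + α·Pr(T_j > c₂ | ·) ≤ α. -/
theorem conditional_error_bound_lemma5
    {Ω : Type*} [MeasurableSpace Ω] (Pr : Measure Ω) [IsProbabilityMeasure Pr]
    (F : ℝ → ℝ → ℝ)
    (hFcont : ∀ θ, Continuous (F θ))
    (hFmono : ∀ θ, Monotone (F θ))
    (hF0strict : StrictMono (F 0))
    (hFsym : ∀ x : ℝ, F 0 (-x) = 1 - F 0 x)
    (hstoch : ∀ θ θ' : ℝ, θ ≤ θ' → ∀ x, F θ' x ≤ F θ x)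
    -- MLR assumption (Assumption 2)
    (f : ℝ → ℝ → ℝ)
    (hf_nonneg : ∀ θ x, 0 ≤ f θ x)
    (hf_meas : ∀ θ, Measurable (f θ))
    (hf_cdf : ∀ θ x, F θ x = ∫ t in Set.Iic x, f θ t)
    (hMLR : ∀ θ θ' : ℝ, θ < θ' → ∀ x₁ x₂ : ℝ, x₁ < x₂ →
      f θ' x₁ * f θ x₂ ≤ f θ' x₂ * f θ x₁)
    (n : ℕ) (θ : Fin n → ℝ) (hθpos : ∀ i, 0 < θ i)
    (T : Fin n → Ω → ℝ) (hT : ∀ i, Measurable (T i))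
    (hcdf : ∀ i x, (Pr {ω | T i ω ≤ x}).toReal = F (θ i) x)
    -- Positive regression dependence (Assumption 3, all nulls false with θ_i > 0)
    (hPRD : ∀ k : Fin n, ∀ φ : (Fin n → ℝ) → ℝ,
      Measurable φ → Monotone φ → (∃ C, ∀ x, |φ x| ≤ C) →
      ∀ u u' : ℝ, u ≤ u' →
        (Pr {ω | u ≤ T k ω} ≠ 0 → Pr {ω | u' ≤ T k ω} ≠ 0 →
          (∫ ω in {ω | u ≤ T k ω}, φ (fun i => T i ω) ∂Pr)
              / (Pr {ω | u ≤ T k ω}).toReal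
            ≤ (∫ ω in {ω | u' ≤ T k ω}, φ (fun i => T i ω) ∂Pr)
              / (Pr {ω | u' ≤ T k ω}).toReal) ∧
        (Pr {ω | T k ω < u} ≠ 0 → Pr {ω | T k ω < u'} ≠ 0 →
          (∫ ω in {ω | T k ω < u}, φ (fun i => T i ω) ∂Pr)
              / (Pr {ω | T k ω < u}).toReal
            ≤ (∫ ω in {ω | T k ω < u'}, φ (fun i => T i ω) ∂Pr)
              / (Pr {ω | T k ω < u'}).toReal))
    (α : ℝ) (hα : α ∈ Set.Ioo (0 : ℝ) 1)
    (c₁ c₂ : ℝ) (hc₁ : F 0 c₁ = α / 2) (hc₂ : F 0 c₂ = 1 - α / 2) :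
    ∀ j : Fin n,
      Pr {ω | ∀ l : Fin n, l < j → c₂ < T l ω} ≠ 0 →
      (Pr ({ω | T j ω < c₁} ∩ {ω | ∀ l : Fin n, l < j → c₂ < T l ω})).toReal
          / (Pr {ω | ∀ l : Fin n, l < j → c₂ < T l ω}).toReal
        + α * ((Pr ({ω | c₂ < T j ω} ∩ {ω | ∀ l : Fin n, l < j → c₂ < T l ω})).toReal
          / (Pr {ω | ∀ l : Fin n, l < j → c₂ < T l ω}).toReal)
        ≤ α :=
  conditional_error_bound_lemma5_general Pr F hFcont hF0strict f hf_cdf hMLR n θ hθpos T hT hcdf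
    hPRD α hα c₁ c₂ hc₁ hc₂
end
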